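/- arXiv:1512.02863 — 9 statements merged into one kernel-verified Lean document; each statement's English description precedes it below -/
import Mathlib

section
/- Let Y be standard Gaussian in R^p and λ_1 ≥ λ_2 ≥ ... ≥ λ_p ≥ 0 with λ_1 > 0. Then the quantities δ_i = E[λ_i Y_i² / Σ_j λ_j Y_j²] satisfy δ_1 ≥ δ_2 ≥ ... ≥ δ_p ≥ 0. -/
open MeasureTheory ProbabilityTheory Real

/-- The law of a vector of `p` i.i.d. standard normal random variables. -/
noncomputable def stdGaussianPi (p : ℕ) : Measure (Fin p → ℝ) :=
  Measure.pi fun _ => gaussianReal 0 1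

/-- The `i`-th eigenvalue of the spatial sign covariance matrix corresponding to
shape eigenvalues `lam`. -/
noncomputable def sscmEigen (p : ℕ) (lam : Fin p → ℝ) (i : Fin p) : ℝ :=
  ∫ ω, lam i * (ω i) ^ 2 / (∑ j, lam j * (ω j) ^ 2) ∂(stdGaussianPi p)

private lemma key_ineq (a b u v R : ℝ) (hab : b ≤ a) (hb : 0 ≤ b) (hu : 0 ≤ u)
    (hv : 0 ≤ v) (hR : 0 ≤ R) :
    b * v / (a * u + (b * v + R)) + b * u / (a * v + (b * u + R)) ≤
      a * u / (a * u + (b * v + R)) + a * v / (a * v + (b * u + R)) := by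
  have ha : 0 ≤ a := hb.trans hab
  have hau : 0 ≤ a * u := mul_nonneg ha hu
  have hav : 0 ≤ a * v := mul_nonneg ha hv
  have hbu : 0 ≤ b * u := mul_nonneg hb hu
  have hbv : 0 ≤ b * v := mul_nonneg hb hv
  set S : ℝ := a * u + (b * v + R) with hSdef
  set S' : ℝ := a * v + (b * u + R) with hS'def
  have hS : 0 ≤ S := by positivity
  have hS' : 0 ≤ S' := by positivity
  rcases hS.eq_or_lt with hS0 | hS0
  · -- S = 0 : then a*u = 0, b*v = 0, R = 0
    have hau0 : a * u = 0 := by nlinarith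
    have hbv0 : b * v = 0 := by nlinarith
    have hR0 : R = 0 := by nlinarith
    rw [← hS0, div_zero, div_zero]
    have hbuav : b * u ≤ a * v := by
      have h1 : b * u ≤ a * u := mul_le_mul_of_nonneg_right hab hu
      nlinarith
    rcases hS'.eq_or_lt with hS'0 | hS'0
    · rw [← hS'0, div_zero, div_zero]
    · exact add_le_add le_rfl ((div_le_div_iff_of_pos_right hS'0).2 hbuav)
  · rcases hS'.eq_or_lt with hS'0 | hS'0
    · -- S' = 0 : then a*v = 0, b*u = 0, R = 0
      have hav0 : a * v = 0 := by nlinarith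
      have hbu0 : b * u = 0 := by nlinarith
      rw [← hS'0, div_zero, div_zero]
      have hbvau : b * v ≤ a * u := by
        have h1 : b * v ≤ a * v := mul_le_mul_of_nonneg_right hab hv
        nlinarith
      exact add_le_add ((div_le_div_iff_of_pos_right hS0).2 hbvau) le_rfl
    · -- both positive
      have hkey : 0 ≤ (a * u - b * v) / S + (a * v - b * u) / S' := by
        rw [div_add_div _ _ hS0.ne' hS'0.ne']
        apply div_nonneg _ (mul_pos hS0 hS'0).le
        have h1 : 0 ≤ (a - b) * (a + b) * u * v := by
          apply mul_nonneg; apply mul_nonneg; apply mul_nonneg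
          · linarith
          · linarith
          · exact hu
          · exact hv
        have h2 : 0 ≤ (a - b) * R * u := by
          apply mul_nonneg (mul_nonneg (by linarith) hR) hu
        have h3 : 0 ≤ (a - b) * R * v := by
          apply mul_nonneg (mul_nonneg (by linarith) hR) hv
        nlinarith [h1, h2, h3]
      have e1 : (a * u - b * v) / S = a * u / S - b * v / S := sub_div _ _ _
      have e2 : (a * v - b * u) / S' = a * v / S' - b * u / S' := sub_div _ _ _
      rw [e1, e2] at hkey
      linarith

theorem sscmEigen_antitone (p : ℕ) (hp : 0 < p) (lam : Fin p → ℝ)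
    (hmono : Antitone lam) (hnonneg : ∀ i, 0 ≤ lam i)
    (hpos : 0 < lam ⟨0, hp⟩) :
    Antitone (sscmEigen p lam) ∧ ∀ i, 0 ≤ sscmEigen p lam i := by
  have hprob : IsProbabilityMeasure (stdGaussianPi p) := by
    unfold stdGaussianPi; infer_instance
  set μ := stdGaussianPi p with hμ
  set f : Fin p → (Fin p → ℝ) → ℝ :=
    fun i ω => lam i * (ω i) ^ 2 / (∑ j, lam j * (ω j) ^ 2) with hf
  have hmeas : ∀ i, Measurable (f i) := by
    intro i
    apply Measurable.div
    · exact (measurable_const.mul ((measurable_pi_apply i).pow measurable_const))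
    · exact Finset.measurable_sum _ fun j _ =>
        (measurable_const.mul ((measurable_pi_apply j).pow measurable_const))
  have hfnonneg : ∀ i ω, 0 ≤ f i ω := by
    intro i ω
    apply div_nonneg (mul_nonneg (hnonneg i) (sq_nonneg _))
    exact Finset.sum_nonneg fun j _ => mul_nonneg (hnonneg j) (sq_nonneg _)
  have hfle : ∀ i ω, f i ω ≤ 1 := by
    intro i ω
    apply div_le_one_of_le₀
    · exact Finset.single_le_sum (fun j _ => mul_nonneg (hnonneg j) (sq_nonneg _))
        (Finset.mem_univ i)
    · exact Finset.sum_nonneg fun j _ => mul_nonneg (hnonneg j) (sq_nonneg _)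
  have hint : ∀ i, Integrable (f i) μ := by
    intro i
    refine (integrable_const (1 : ℝ)).mono' (hmeas i).aestronglyMeasurable ?_
    filter_upwards with ω
    rw [Real.norm_eq_abs, abs_of_nonneg (hfnonneg i ω)]
    exact hfle i ω
  constructor
  · intro i j hij
    rcases eq_or_lt_of_le hij with rfl | hlt
    · exact le_rfl
    have hne : i ≠ j := ne_of_lt hlt
    set σ : Equiv.Perm (Fin p) := Equiv.swap i j with hσ
    set T : (Fin p → ℝ) ≃ᵐ (Fin p → ℝ) :=
      MeasurableEquiv.piCongrLeft (fun _ : Fin p => ℝ) σ with hT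
    have hTpres : MeasurePreserving T μ μ :=
      measurePreserving_piCongrLeft (α := fun _ : Fin p => ℝ) (fun _ => gaussianReal 0 1) σ
    have hTapp : ∀ (ω : Fin p → ℝ) (k : Fin p), T ω k = ω (σ k) := by
      intro ω k
      have h1 := MeasurableEquiv.piCongrLeft_apply_apply (β := fun _ : Fin p => ℝ) σ ω (σ.symm k)
      rw [Equiv.apply_symm_apply] at h1
      rw [h1, hσ, Equiv.symm_swap]
    -- integral of f k ∘ T equals integral of f k
    have hcomp : ∀ k, ∫ ω, f k (T ω) ∂μ = sscmEigen p lam k := by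
      intro k
      exact hTpres.integral_comp T.measurableEmbedding (f k)
    have hintT : ∀ k, Integrable (fun ω => f k (T ω)) μ := by
      intro k
      exact ((hTpres.integrable_comp_emb T.measurableEmbedding).2 (hint k))
    -- pointwise inequality
    have hpw : ∀ ω : Fin p → ℝ, f j ω + f j (T ω) ≤ f i ω + f i (T ω) := by
      intro ω
      have hsplit : ∀ c : Fin p → ℝ,
          ∑ m, c m = c i + (c j + ∑ m ∈ (Finset.univ.erase i).erase j, c m) := by
        intro c
        rw [← Finset.add_sum_erase _ c (Finset.mem_univ i)]
        congr 1
        rw [← Finset.add_sum_erase _ c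
          (Finset.mem_erase.2 ⟨hne.symm, Finset.mem_univ j⟩)]
      have hσi : σ i = j := Equiv.swap_apply_left i j
      have hσj : σ j = i := Equiv.swap_apply_right i j
      have hS : (∑ m, lam m * (ω m) ^ 2) =
          lam i * (ω i) ^ 2 + (lam j * (ω j) ^ 2 +
            ∑ m ∈ (Finset.univ.erase i).erase j, lam m * (ω m) ^ 2) :=
        hsplit _
      have hS' : (∑ m, lam m * (T ω m) ^ 2) =
          lam i * (ω j) ^ 2 + (lam j * (ω i) ^ 2 +
            ∑ m ∈ (Finset.univ.erase i).erase j, lam m * (ω m) ^ 2) := by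
        rw [hsplit fun m => lam m * (T ω m) ^ 2, hTapp ω i, hTapp ω j, hσi, hσj]
        congr 1
        congr 1
        apply Finset.sum_congr rfl
        intro m hm
        have hmj : m ≠ j := (Finset.mem_erase.1 hm).1
        have hmi : m ≠ i := (Finset.mem_erase.1 (Finset.mem_erase.1 hm).2).1
        rw [hTapp ω m, hσ, Equiv.swap_apply_of_ne_of_ne hmi hmj]
      have hR : 0 ≤ ∑ m ∈ (Finset.univ.erase i).erase j, lam m * (ω m) ^ 2 :=
        Finset.sum_nonneg fun m _ => mul_nonneg (hnonneg m) (sq_nonneg _)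
      show lam j * (ω j) ^ 2 / (∑ m, lam m * (ω m) ^ 2) +
            lam j * (T ω j) ^ 2 / (∑ m, lam m * (T ω m) ^ 2) ≤
          lam i * (ω i) ^ 2 / (∑ m, lam m * (ω m) ^ 2) +
            lam i * (T ω i) ^ 2 / (∑ m, lam m * (T ω m) ^ 2)
      rw [hS, hS', hTapp ω i, hTapp ω j, hσi, hσj]
      exact key_ineq (lam i) (lam j) ((ω i) ^ 2) ((ω j) ^ 2) _
        (hmono hij) (hnonneg j) (sq_nonneg _) (sq_nonneg _) hR
    have hmain : ∫ ω, (f j ω + f j (T ω)) ∂μ ≤ ∫ ω, (f i ω + f i (T ω)) ∂μ :=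
      integral_mono ((hint j).add (hintT j)) ((hint i).add (hintT i)) hpw
    rw [integral_add (hint j) (hintT j), integral_add (hint i) (hintT i),
      hcomp i, hcomp j] at hmain
    have hi : ∫ ω, f i ω ∂μ = sscmEigen p lam i := rfl
    have hj : ∫ ω, f j ω ∂μ = sscmEigen p lam j := rfl
    rw [hi, hj] at hmain
    linarith
  · intro i
    exact integral_nonneg (hfnonneg i)
end

section
/- Let Y be standard Gaussian in R^p, λ_1 ≥ ... ≥ λ_p ≥ 0 with λ_1 > 0, and δ_i = E[λ_i Y_i² / Σ_j λ_j Y_j²]. For indices i ≠ j, δ_i = δ_j if and only if λ_i = λ_j. -/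
open MeasureTheory ProbabilityTheory Real

namespace SscmAux

variable {p : ℕ}

instance : IsProbabilityMeasure (stdGaussianPi p) := by
  unfold stdGaussianPi; infer_instance

lemma ae_ne_zero (i : Fin p) : ∀ᵐ ω ∂stdGaussianPi p, ω i ≠ 0 := by
  rw [ae_iff]
  have hset : {ω : Fin p → ℝ | ¬ ω i ≠ 0} =
      Set.pi Set.univ (fun k => if k = i then ({0} : Set ℝ) else Set.univ) := by
    ext ω
    simp only [Set.mem_setOf_eq, not_not, Set.mem_pi, Set.mem_univ, forall_true_left]
    constructor
    · intro h k
      by_cases hk : k = i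
      · subst hk; simp [h]
      · simp [hk]
    · intro h
      have := h i
      simpa using this
  rw [hset, stdGaussianPi, Measure.pi_pi]
  apply Finset.prod_eq_zero (Finset.mem_univ i)
  simp only [if_pos rfl]
  exact gaussianReal_absolutelyContinuous 0 one_ne_zero (by simp)

lemma swap_integral (i j : Fin p) (g : (Fin p → ℝ) → ℝ) :
    ∫ ω, g ω ∂stdGaussianPi p
      = ∫ ω, g (fun k => ω (Equiv.swap i j k)) ∂stdGaussianPi p := by
  set T := MeasurableEquiv.piCongrLeft (fun _ : Fin p => ℝ) (Equiv.swap i j) with hT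
  have hpres : MeasurePreserving T (stdGaussianPi p) (stdGaussianPi p) :=
    measurePreserving_piCongrLeft (fun _ : Fin p => gaussianReal 0 1) (Equiv.swap i j)
  have hTapp : ∀ (ω : Fin p → ℝ) (k : Fin p), T ω k = ω (Equiv.swap i j k) := by
    intro ω k
    conv_lhs => rw [show k = Equiv.swap i j (Equiv.swap i j k) from
      (Equiv.swap_apply_self i j k).symm]
    rw [hT, MeasurableEquiv.coe_piCongrLeft]
    exact Equiv.piCongrLeft_apply_apply _ _ _ _
  calc ∫ ω, g ω ∂stdGaussianPi p
      = ∫ ω, g (T ω) ∂stdGaussianPi p :=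
        (hpres.integral_comp T.measurableEmbedding g).symm
    _ = ∫ ω, g (fun k => ω (Equiv.swap i j k)) ∂stdGaussianPi p := by
        refine integral_congr_ae (Filter.Eventually.of_forall fun ω => ?_)
        show g (T ω) = g fun k => ω (Equiv.swap i j k)
        rw [funext (hTapp ω)]

lemma swap_sum (lam : Fin p → ℝ) (i j : Fin p) (ω : Fin p → ℝ) :
    ∑ k, lam k * ω (Equiv.swap i j k) ^ 2 = ∑ k, lam (Equiv.swap i j k) * ω k ^ 2 := by
  have h := Equiv.sum_comp (Equiv.swap i j)
    (fun k => lam (Equiv.swap i j k) * ω k ^ 2)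
  simp only [Equiv.swap_apply_self] at h
  exact h

lemma sum_split (i j : Fin p) (hij : i ≠ j) (c : Fin p → ℝ) :
    ∑ k, c k = c i + c j + ∑ k ∈ (Finset.univ.erase i).erase j, c k := by
  have h1 := Finset.sum_erase_add Finset.univ c (Finset.mem_univ i)
  have h2 := Finset.sum_erase_add (Finset.univ.erase i) c
    (Finset.mem_erase.mpr ⟨hij.symm, Finset.mem_univ j⟩)
  rw [← h1, ← h2]
  ring

lemma meas_f (lam : Fin p → ℝ) (c : Fin p) :
    Measurable (fun ω : Fin p → ℝ => lam c * ω c ^ 2 / ∑ k, lam k * ω k ^ 2) := by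
  apply Measurable.div
  · exact ((measurable_pi_apply c).pow_const 2).const_mul _
  · exact Finset.measurable_sum _ fun k _ => ((measurable_pi_apply k).pow_const 2).const_mul _

lemma f_nonneg (lam : Fin p → ℝ) (hnonneg : ∀ k, 0 ≤ lam k) (c : Fin p) (ω : Fin p → ℝ) :
    0 ≤ lam c * ω c ^ 2 / ∑ k, lam k * ω k ^ 2 :=
  div_nonneg (mul_nonneg (hnonneg c) (sq_nonneg _))
    (Finset.sum_nonneg fun k _ => mul_nonneg (hnonneg k) (sq_nonneg _))

lemma f_le_one (lam : Fin p → ℝ) (hnonneg : ∀ k, 0 ≤ lam k) (c : Fin p) (ω : Fin p → ℝ) :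
    lam c * ω c ^ 2 / ∑ k, lam k * ω k ^ 2 ≤ 1 := by
  by_cases hS : (∑ k, lam k * ω k ^ 2) = 0
  · rw [hS, div_zero]; norm_num
  · rw [div_le_one (lt_of_le_of_ne
      (Finset.sum_nonneg fun k _ => mul_nonneg (hnonneg k) (sq_nonneg _)) (Ne.symm hS))]
    exact Finset.single_le_sum (fun k _ => mul_nonneg (hnonneg k) (sq_nonneg _))
      (Finset.mem_univ c)

lemma integrable_f (lam : Fin p → ℝ) (hnonneg : ∀ k, 0 ≤ lam k) (c : Fin p) :
    Integrable (fun ω : Fin p → ℝ => lam c * ω c ^ 2 / ∑ k, lam k * ω k ^ 2)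
      (stdGaussianPi p) := by
  refine Integrable.mono' (integrable_const 1) (meas_f lam c).aestronglyMeasurable
    (Filter.Eventually.of_forall fun ω => ?_)
  rw [Real.norm_eq_abs, abs_of_nonneg (f_nonneg lam hnonneg c ω)]
  exact f_le_one lam hnonneg c ω

lemma key_ineq (A B a b R : ℝ) (hAB : B < A) (hB : 0 ≤ B) (ha : 0 < a) (hb : 0 < b)
    (hR : 0 ≤ R) :
    0 < (A * a - B * b) / (A * a + B * b + R) + (A * b - B * a) / (B * a + A * b + R) := by
  have hA : 0 < A := lt_of_le_of_lt hB hAB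
  have hd1 : 0 < A * a + B * b + R := by nlinarith
  have hd2 : 0 < B * a + A * b + R := by nlinarith
  rw [div_add_div _ _ hd1.ne' hd2.ne']
  apply div_pos _ (mul_pos hd1 hd2)
  nlinarith [mul_pos ha hb, mul_pos (mul_pos ha hb) (sub_pos.mpr hAB),
    mul_nonneg hR (mul_nonneg (sub_pos.mpr hAB).le (add_pos ha hb).le)]

set_option maxHeartbeats 2000000 in
lemma sscm_lt (lam : Fin p → ℝ) (hnonneg : ∀ k, 0 ≤ lam k) (i j : Fin p)
    (hij : i ≠ j) (hlt : lam j < lam i) :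
    sscmEigen p lam j < sscmEigen p lam i := by
  set d : (Fin p → ℝ) → ℝ :=
    fun ω => lam i * ω i ^ 2 / (∑ k, lam k * ω k ^ 2)
      - lam j * ω j ^ 2 / (∑ k, lam k * ω k ^ 2) with hd
  have hdmeas : Measurable d := (meas_f lam i).sub (meas_f lam j)
  have hdbound : ∀ ω, ‖d ω‖ ≤ 1 := by
    intro ω
    rw [Real.norm_eq_abs, abs_le]
    constructor
    · have := f_le_one lam hnonneg j ω
      have := f_nonneg lam hnonneg i ω
      simp only [hd]; linarith
    · have := f_le_one lam hnonneg i ω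
      have := f_nonneg lam hnonneg j ω
      simp only [hd]; linarith
  have hdint : Integrable d (stdGaussianPi p) := (integrable_f lam hnonneg i).sub (integrable_f lam hnonneg j)
  set d2 : (Fin p → ℝ) → ℝ := fun ω => d (fun k => ω (Equiv.swap i j k)) with hd2
  have hswapmeas : Measurable (fun ω : Fin p → ℝ => (fun k => ω (Equiv.swap i j k))) :=
    measurable_pi_lambda _ fun k => measurable_pi_apply _
  have hd2meas : Measurable d2 := hdmeas.comp hswapmeas
  have hd2int : Integrable d2 (stdGaussianPi p) := by
    refine Integrable.mono' (integrable_const 1) hd2meas.aestronglyMeasurable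
      (Filter.Eventually.of_forall fun ω => ?_)
    simp only [hd2]
    exact hdbound (fun k => ω (Equiv.swap i j k))
  have hint2 : ∫ ω, d2 ω ∂(stdGaussianPi p) = ∫ ω, d ω ∂(stdGaussianPi p) := (swap_integral i j d).symm
  set g : (Fin p → ℝ) → ℝ := fun ω => d ω + d2 ω with hg
  have hgint : Integrable g (stdGaussianPi p) := hdint.add hd2int
  have hgval : ∫ ω, g ω ∂(stdGaussianPi p) = 2 * ∫ ω, d ω ∂(stdGaussianPi p) := by
    rw [hg]
    rw [integral_add hdint hd2int, hint2]
    ring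
  -- pointwise positivity a.e.
  have hgpos : ∀ᵐ ω ∂(stdGaussianPi p), 0 < g ω := by
    filter_upwards [ae_ne_zero (p := p) i, ae_ne_zero (p := p) j] with ω hi0 hj0
    have ha : 0 < ω i ^ 2 := by positivity
    have hb : 0 < ω j ^ 2 := by positivity
    set R : ℝ := ∑ k ∈ (Finset.univ.erase i).erase j, lam k * ω k ^ 2 with hR
    have hR0 : 0 ≤ R :=
      Finset.sum_nonneg fun k _ => mul_nonneg (hnonneg k) (sq_nonneg _)
    have hS : (∑ k, lam k * ω k ^ 2) = lam i * ω i ^ 2 + lam j * ω j ^ 2 + R :=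
      sum_split i j hij _
    have hS' : (∑ k, lam k * ω (Equiv.swap i j k) ^ 2)
        = lam j * ω i ^ 2 + lam i * ω j ^ 2 + R := by
      rw [swap_sum lam i j ω]
      rw [sum_split i j hij (fun k => lam (Equiv.swap i j k) * ω k ^ 2)]
      rw [Equiv.swap_apply_left, Equiv.swap_apply_right, hR]
      congr 1
      refine Finset.sum_congr rfl fun k hk => ?_
      have hkj : k ≠ j := (Finset.mem_erase.mp hk).1
      have hki : k ≠ i := (Finset.mem_erase.mp (Finset.mem_erase.mp hk).2).1
      rw [Equiv.swap_apply_of_ne_of_ne hki hkj]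
    have hdω : d ω = (lam i * ω i ^ 2 - lam j * ω j ^ 2)
        / (lam i * ω i ^ 2 + lam j * ω j ^ 2 + R) := by
      rw [hd]
      simp only
      rw [hS, sub_div]
    have hd2ω : d2 ω = (lam i * ω j ^ 2 - lam j * ω i ^ 2)
        / (lam j * ω i ^ 2 + lam i * ω j ^ 2 + R) := by
      rw [hd2, hd]
      simp only [Equiv.swap_apply_left, Equiv.swap_apply_right]
      rw [hS', sub_div]
    rw [hg]
    simp only
    rw [hdω, hd2ω]
    exact key_ineq (lam i) (lam j) (ω i ^ 2) (ω j ^ 2) R hlt (hnonneg j) ha hb hR0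
  -- hence the integral of g is positive
  have hg0 : 0 ≤ᵐ[stdGaussianPi p] g := hgpos.mono fun ω h => h.le
  have hgintpos : 0 < ∫ ω, g ω ∂(stdGaussianPi p) := by
    rw [integral_pos_iff_support_of_nonneg_ae hg0 hgint]
    have h1 : (stdGaussianPi p) {ω | ¬ 0 < g ω} = 0 := by
      rw [← ae_iff] at *
      exact hgpos
    have hsub : (Set.univ : Set (Fin p → ℝ)) ⊆ Function.support g ∪ {ω | ¬ 0 < g ω} := by
      intro ω _
      by_cases h : 0 < g ω
      · exact Or.inl h.ne'
      · exact Or.inr h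
    rw [pos_iff_ne_zero]
    intro h0
    have h2 : (stdGaussianPi p) Set.univ ≤ 0 := by
      calc (stdGaussianPi p) Set.univ ≤ (stdGaussianPi p) (Function.support g) + (stdGaussianPi p) {ω | ¬ 0 < g ω} :=
            le_trans (measure_mono hsub) (measure_union_le _ _)
        _ = 0 := by rw [h0, h1, add_zero]
    simp [measure_univ] at h2
  -- conclude
  have hdiff : sscmEigen p lam i - sscmEigen p lam j = ∫ ω, d ω ∂(stdGaussianPi p) := by
    rw [hd, integral_sub (integrable_f lam hnonneg i) (integrable_f lam hnonneg j)]
    rfl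
  rw [hgval] at hgintpos
  linarith [hgintpos, hdiff.symm.le, hdiff.le]

lemma sscm_congr (lam : Fin p → ℝ) (i j : Fin p) (heq : lam i = lam j) :
    sscmEigen p lam i = sscmEigen p lam j := by
  unfold sscmEigen
  rw [swap_integral i j (fun ω => lam i * ω i ^ 2 / ∑ k, lam k * ω k ^ 2)]
  refine integral_congr_ae (Filter.Eventually.of_forall fun ω => ?_)
  simp only [Equiv.swap_apply_left]
  rw [swap_sum lam i j ω]
  have hsum : ∑ k, lam (Equiv.swap i j k) * ω k ^ 2 = ∑ k, lam k * ω k ^ 2 := by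
    refine Finset.sum_congr rfl fun k _ => ?_
    by_cases hk : k = i
    · subst hk; rw [Equiv.swap_apply_left, ← heq]
    · by_cases hk' : k = j
      · subst hk'; rw [Equiv.swap_apply_right, heq]
      · rw [Equiv.swap_apply_of_ne_of_ne hk hk']
  rw [hsum, heq]

end SscmAux

theorem sscmEigen_eq_iff (p : ℕ) (hp : 0 < p) (lam : Fin p → ℝ)
    (hmono : Antitone lam) (hnonneg : ∀ i, 0 ≤ lam i)
    (hpos : 0 < lam ⟨0, hp⟩) (i j : Fin p) (hij : i ≠ j) :
    sscmEigen p lam i = sscmEigen p lam j ↔ lam i = lam j := by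
  constructor
  · intro h
    by_contra hne
    rcases lt_or_gt_of_ne hne with hlt | hlt
    · exact (ne_of_lt (SscmAux.sscm_lt lam hnonneg j i hij.symm hlt)) h
    · exact (ne_of_gt (SscmAux.sscm_lt lam hnonneg i j hij hlt)) h
  · exact fun h => SscmAux.sscm_congr lam i j h
end

section
/- Let Y be standard Gaussian in R^p, λ_1 ≥ ... ≥ λ_p ≥ 0, and δ_i = E[λ_i Y_i² / Σ_k λ_k Y_k²]. For indices i < j with λ_j > 0 one has δ_i / δ_j ≤ λ_i / λ_j, i.e. λ_j δ_i ≤ λ_i δ_j. -/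
open MeasureTheory ProbabilityTheory Real

/-! Put `S ω = ∑ k, λ_k ω_k²` and `F ω = λ_i λ_j (ω_j² - ω_i²) / S ω`, so that
`∫ F = λ_i δ_j - λ_j δ_i`; every integrand is bounded because `λ_k ω_k² ≤ S`. The Gaussian law is
invariant under the swap `τ` of coordinates `i` and `j`, hence `2 ∫ F = ∫ (F + F ∘ τ)`, and
`F + F ∘ τ = λ_i λ_j (λ_i - λ_j) (ω_i² - ω_j²)² / (S · S ∘ τ) ≥ 0` because `λ_j ≤ λ_i`. -/

open Finset

lemma div_le_div_of_mul_le_mul_of_pos {a b c d : ℝ} (hb : 0 < b) (ha : 0 ≤ a) (hd : 0 ≤ d)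
    (h : b * c ≤ a * d) : c / d ≤ a / b := by
  rcases hd.eq_or_lt with rfl | hd
  · simpa using div_nonneg ha hb.le
  · rw [div_le_div_iff₀ hd hb]
    linarith

lemma mul_sub_div_add_mul_sub_div_swap_nonneg {a b x y r : ℝ} (hb : 0 ≤ b) (hba : b ≤ a)
    (hx : 0 ≤ x) (hy : 0 ≤ y) (hr : 0 ≤ r) :
    0 ≤ a * b * (y - x) / (a * x + b * y + r) + a * b * (x - y) / (a * y + b * x + r) := by
  have ha : 0 ≤ a := hb.trans hba
  rcases (show 0 ≤ a * x + b * y + r by positivity).eq_or_lt with hS | hS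
  · have hax : a * x = 0 := by nlinarith [mul_nonneg ha hx, mul_nonneg hb hy]
    have hby : b * y = 0 := by nlinarith [mul_nonneg ha hx, mul_nonneg hb hy]
    have h₁ : a * b * (y - x) = 0 := by linear_combination a * hby - b * hax
    have h₂ : a * b * (x - y) = 0 := by linear_combination b * hax - a * hby
    simp only [h₁, h₂, zero_div, add_zero, le_refl]
  rcases (show 0 ≤ a * y + b * x + r by positivity).eq_or_lt with hS' | hS'
  · have hay : a * y = 0 := by nlinarith [mul_nonneg ha hy, mul_nonneg hb hx]
    have hbx : b * x = 0 := by nlinarith [mul_nonneg ha hy, mul_nonneg hb hx]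
    have h₁ : a * b * (y - x) = 0 := by linear_combination b * hay - a * hbx
    have h₂ : a * b * (x - y) = 0 := by linear_combination a * hbx - b * hay
    simp only [h₁, h₂, zero_div, add_zero, le_refl]
  rw [div_add_div _ _ hS.ne' hS'.ne']
  refine div_nonneg ?_ (by positivity)
  have hab : 0 ≤ a * b * (a - b) := mul_nonneg (mul_nonneg ha hb) (sub_nonneg.2 hba)
  calc 0 ≤ a * b * (a - b) * (x - y) ^ 2 := by positivity
    _ = _ := by ring

lemma measurePreserving_comp_perm {ι β : Type*} [Fintype ι] [MeasurableSpace β] (ν : Measure β)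
    [SigmaFinite ν] (σ : Equiv.Perm ι) :
    MeasurePreserving (fun ω : ι → β => ω ∘ σ) (Measure.pi fun _ => ν) (Measure.pi fun _ => ν) := by
  convert measurePreserving_piCongrLeft (fun _ => ν) σ.symm using 1
  ext ω k
  simpa using (MeasurableEquiv.piCongrLeft_apply_apply σ.symm (β := fun _ => β) ω (σ k)).symm

lemma integral_nonneg_of_add_comp_nonneg {α : Type*} [MeasurableSpace α] {μ : Measure α}
    {T : α → α} (hT : MeasurePreserving T μ μ) {F : α → ℝ} (hF : Integrable F μ)
    (h : ∀ᵐ x ∂μ, 0 ≤ F x + F (T x)) : 0 ≤ ∫ x, F x ∂μ := by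
  have hcomp : ∫ x, F (T x) ∂μ = ∫ x, F x ∂μ := by
    rw [← integral_map hT.aemeasurable (by rw [hT.map_eq]; exact hF.aestronglyMeasurable),
      hT.map_eq]
  have hFT : Integrable (fun x => F (T x)) μ := hT.integrable_comp_of_integrable hF
  have hsum := integral_nonneg_of_ae h
  rw [integral_add hF hFT, hcomp] at hsum
  linarith

section WeightedSquares

variable {ι : Type*} [Fintype ι] {lam : ι → ℝ}

lemma sum_mul_sq_eq_add_add_sum_compl [DecidableEq ι] (ω : ι → ℝ) {i j : ι} (hij : i ≠ j) :
    ∑ k, lam k * ω k ^ 2 =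
      lam i * ω i ^ 2 + lam j * ω j ^ 2 + ∑ k ∈ {i, j}ᶜ, lam k * ω k ^ 2 := by
  rw [← sum_add_sum_compl {i, j}, sum_pair hij]

lemma sum_mul_sq_comp_swap [DecidableEq ι] (ω : ι → ℝ) {i j : ι} (hij : i ≠ j) :
    ∑ k, lam k * ω (Equiv.swap i j k) ^ 2 =
      lam i * ω j ^ 2 + lam j * ω i ^ 2 + ∑ k ∈ {i, j}ᶜ, lam k * ω k ^ 2 := by
  rw [← sum_add_sum_compl {i, j}, sum_pair hij, Equiv.swap_apply_left, Equiv.swap_apply_right]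
  congr 1
  refine sum_congr rfl fun k hk => ?_
  simp only [mem_compl, mem_insert, mem_singleton, not_or] at hk
  rw [Equiv.swap_apply_of_ne_of_ne hk.1 hk.2]

lemma integrable_mul_sq_div_sum {μ : Measure (ι → ℝ)} [IsFiniteMeasure μ]
    (hlam : ∀ k, 0 ≤ lam k) (i : ι) :
    Integrable (fun ω : ι → ℝ => lam i * ω i ^ 2 / ∑ k, lam k * ω k ^ 2) μ := by
  refine Integrable.of_bound (Measurable.aestronglyMeasurable (by fun_prop)) 1
    (ae_of_all _ fun ω => ?_)
  have hterm : ∀ k, 0 ≤ lam k * ω k ^ 2 := fun k => mul_nonneg (hlam k) (sq_nonneg _)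
  rw [Real.norm_eq_abs, abs_of_nonneg (div_nonneg (hterm i) (sum_nonneg fun k _ => hterm k))]
  exact div_le_one_of_le₀ (single_le_sum (fun k _ => hterm k) (mem_univ i))
    (sum_nonneg fun k _ => hterm k)

theorem mul_integral_mul_sq_div_sum_le [DecidableEq ι] {μ : Measure (ι → ℝ)} [IsFiniteMeasure μ]
    {i j : ι} (hμ : MeasurePreserving (fun ω : ι → ℝ => ω ∘ Equiv.swap i j) μ μ)
    (hlam : ∀ k, 0 ≤ lam k) (hij : i ≠ j) (hji : lam j ≤ lam i) :
    lam j * ∫ ω, lam i * ω i ^ 2 / ∑ k, lam k * ω k ^ 2 ∂μ ≤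
      lam i * ∫ ω, lam j * ω j ^ 2 / ∑ k, lam k * ω k ^ 2 ∂μ := by
  rw [← integral_const_mul, ← integral_const_mul, ← sub_nonneg,
    ← integral_sub ((integrable_mul_sq_div_sum hlam j).const_mul _)
      ((integrable_mul_sq_div_sum hlam i).const_mul _)]
  refine integral_nonneg_of_add_comp_nonneg hμ
    (((integrable_mul_sq_div_sum hlam j).const_mul _).sub
      ((integrable_mul_sq_div_sum hlam i).const_mul _)) (ae_of_all _ fun ω => ?_)
  simp only [Function.comp_apply, Equiv.swap_apply_left, Equiv.swap_apply_right]
  rw [sum_mul_sq_eq_add_add_sum_compl ω hij, sum_mul_sq_comp_swap ω hij]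
  convert mul_sub_div_add_mul_sub_div_swap_nonneg (hlam j) hji (sq_nonneg (ω i))
    (sq_nonneg (ω j)) (sum_nonneg fun k _ => mul_nonneg (hlam k) (sq_nonneg (ω k))) using 1
  ring

end WeightedSquares

instance (p : ℕ) : IsProbabilityMeasure (stdGaussianPi p) := by
  unfold stdGaussianPi; infer_instance

lemma sscmEigen_nonneg {p : ℕ} {lam : Fin p → ℝ} (hlam : ∀ k, 0 ≤ lam k) (i : Fin p) :
    0 ≤ sscmEigen p lam i :=
  integral_nonneg fun _ => div_nonneg (mul_nonneg (hlam i) (sq_nonneg _))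
    (sum_nonneg fun k _ => mul_nonneg (hlam k) (sq_nonneg _))

theorem sscmEigen_ratio_le (p : ℕ) (lam : Fin p → ℝ)
    (hmono : Antitone lam) (hnonneg : ∀ i, 0 ≤ lam i)
    (i j : Fin p) (hij : i < j) (hj : 0 < lam j) :
    sscmEigen p lam i / sscmEigen p lam j ≤ lam i / lam j ∧
      lam j * sscmEigen p lam i ≤ lam i * sscmEigen p lam j := by
  have hmul : lam j * sscmEigen p lam i ≤ lam i * sscmEigen p lam j :=
    mul_integral_mul_sq_div_sum_le (measurePreserving_comp_perm _ _) hnonneg hij.ne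
      (hmono hij.le)
  exact ⟨div_le_div_of_mul_le_mul_of_pos hj (hnonneg i) (sscmEigen_nonneg hnonneg j) hmul, hmul⟩
end

section
/- Let Y be standard Gaussian in R^p, λ_1 ≥ ... ≥ λ_p ≥ 0, and δ_i = E[λ_i Y_i² / Σ_k λ_k Y_k²]. For indices i < j with λ_i > λ_j > 0 one has the strict inequality δ_i / δ_j < λ_i / λ_j. -/
open MeasureTheory ProbabilityTheory Real

namespace SscmAux

instance (p : ℕ) : IsProbabilityMeasure (stdGaussianPi p) := by
  unfold stdGaussianPi; infer_instance

/-- The denominator. -/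
noncomputable def sumS (p : ℕ) (lam : Fin p → ℝ) (ω : Fin p → ℝ) : ℝ :=
  ∑ l, lam l * ω l ^ 2

/-- The normalized square of coordinate `k`. -/
noncomputable def qq (p : ℕ) (lam : Fin p → ℝ) (k : Fin p) (ω : Fin p → ℝ) : ℝ :=
  ω k ^ 2 / sumS p lam ω

lemma sumS_measurable (p : ℕ) (lam : Fin p → ℝ) : Measurable (sumS p lam) :=
  Finset.measurable_sum _ fun k _ => measurable_const.mul ((measurable_pi_apply k).pow_const 2)

lemma sumS_nonneg (p : ℕ) (lam : Fin p → ℝ) (h : ∀ k, 0 ≤ lam k) (ω : Fin p → ℝ) :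
    0 ≤ sumS p lam ω :=
  Finset.sum_nonneg fun k _ => mul_nonneg (h k) (sq_nonneg _)

lemma le_sumS (p : ℕ) (lam : Fin p → ℝ) (h : ∀ k, 0 ≤ lam k) (ω : Fin p → ℝ) (k : Fin p) :
    lam k * ω k ^ 2 ≤ sumS p lam ω :=
  Finset.single_le_sum (fun l _ => mul_nonneg (h l) (sq_nonneg _)) (Finset.mem_univ k)

lemma qq_nonneg (p : ℕ) (lam : Fin p → ℝ) (h : ∀ k, 0 ≤ lam k) (k : Fin p) (ω : Fin p → ℝ) :
    0 ≤ qq p lam k ω :=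
  div_nonneg (sq_nonneg _) (sumS_nonneg p lam h ω)

lemma qq_le (p : ℕ) (lam : Fin p → ℝ) (h : ∀ k, 0 ≤ lam k) (k : Fin p) (hk : 0 < lam k)
    (ω : Fin p → ℝ) : qq p lam k ω ≤ (lam k)⁻¹ := by
  rcases eq_or_lt_of_le (sumS_nonneg p lam h ω) with hS | hS
  · simp [qq, ← hS, inv_nonneg.mpr hk.le]
  · rw [qq, div_le_iff₀ hS, inv_mul_eq_div, le_div_iff₀ hk, mul_comm]
    exact le_sumS p lam h ω k

lemma qq_measurable (p : ℕ) (lam : Fin p → ℝ) (k : Fin p) : Measurable (qq p lam k) :=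
  ((measurable_pi_apply k).pow_const 2).div (sumS_measurable p lam)

lemma qq_integrable (p : ℕ) (lam : Fin p → ℝ) (h : ∀ k, 0 ≤ lam k) (k : Fin p)
    (hk : 0 < lam k) : Integrable (qq p lam k) (stdGaussianPi p) := by
  refine Integrable.mono' (integrable_const ((lam k)⁻¹))
    (qq_measurable p lam k).aestronglyMeasurable (Filter.Eventually.of_forall fun ω => ?_)
  rw [Real.norm_eq_abs, abs_of_nonneg (qq_nonneg p lam h k ω)]
  exact qq_le p lam h k hk ω

lemma sscmEigen_eq (p : ℕ) (lam : Fin p → ℝ) (k : Fin p) :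
    sscmEigen p lam k = lam k * ∫ ω, qq p lam k ω ∂(stdGaussianPi p) := by
  rw [sscmEigen, ← integral_const_mul]
  congr 1 with ω
  rw [qq, sumS, mul_div_assoc]

lemma stdGaussianPi_null {n : ℕ} (i : Fin (n + 1)) (g : (Fin n → ℝ) → ℝ) (hg : Measurable g) :
    stdGaussianPi (n + 1) {ω | ω i = g (fun k => ω (i.succAbove k))} = 0 := by
  have MP := measurePreserving_piFinSuccAbove (fun _ : Fin (n + 1) => gaussianReal 0 1) i
  set t : Set (ℝ × (Fin n → ℝ)) := {q | q.1 = g q.2} with ht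
  have htm : MeasurableSet t := measurableSet_eq_fun measurable_fst (hg.comp measurable_snd)
  have hset : {ω : Fin (n + 1) → ℝ | ω i = g (fun k => ω (i.succAbove k))}
      = (MeasurableEquiv.piFinSuccAbove (fun _ => ℝ) i) ⁻¹' t := rfl
  rw [stdGaussianPi, hset, MP.measure_preimage htm.nullMeasurableSet,
    Measure.prod_apply_symm htm]
  have h0 : ∀ y : Fin n → ℝ, (gaussianReal 0 1) ((fun x => (x, y)) ⁻¹' t) = 0 := by
    intro y
    have hx : ((fun x => (x, y)) ⁻¹' t) = {g y} := by ext x; simp [ht]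
    rw [hx]
    exact (gaussianReal_absolutelyContinuous 0 one_ne_zero) (measure_singleton _)
  simp [h0]

lemma stdGaussianPi_ae (p : ℕ) (i j : Fin p) (hij : i ≠ j) :
    ∀ᵐ ω ∂(stdGaussianPi p), ω j ≠ 0 ∧ ω i ^ 2 ≠ ω j ^ 2 := by
  cases p with
  | zero => exact i.elim0
  | succ n =>
    obtain ⟨k, hk⟩ := Fin.exists_succAbove_eq (show j ≠ i from hij.symm)
    have h1 : stdGaussianPi (n + 1) {ω | ω j = 0} = 0 := by
      simpa using stdGaussianPi_null j (fun _ => (0 : ℝ)) measurable_const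
    have h2 : stdGaussianPi (n + 1) {ω | ω i = ω j} = 0 := by
      have := stdGaussianPi_null i (fun y => y k) (measurable_pi_apply k)
      simpa [hk] using this
    have h3 : stdGaussianPi (n + 1) {ω | ω i = -ω j} = 0 := by
      have := stdGaussianPi_null i (fun y => -y k) (measurable_pi_apply k).neg
      simpa [hk] using this
    rw [ae_iff]
    refine measure_mono_null ?_ (measure_union_null h1 (measure_union_null h2 h3))
    intro ω hω
    simp only [Set.mem_setOf_eq, not_and_or, not_not, ne_eq] at hω
    rcases hω with h | h
    · exact Or.inl h
    · rcases sq_eq_sq_iff_eq_or_eq_neg.mp h with h | h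
      · exact Or.inr (Or.inl h)
      · exact Or.inr (Or.inr h)

end SscmAux

open SscmAux in
theorem sscmEigen_ratio_lt (p : ℕ) (lam : Fin p → ℝ)
    (hmono : Antitone lam) (hnonneg : ∀ i, 0 ≤ lam i)
    (i j : Fin p) (hij : i < j) (hj : 0 < lam j) (hlt : lam j < lam i) :
    sscmEigen p lam i / sscmEigen p lam j < lam i / lam j := by
  have hi : 0 < lam i := hj.trans hlt
  have hne : i ≠ j := ne_of_lt hij
  set μ := stdGaussianPi p with hμ
  set e : Equiv.Perm (Fin p) := Equiv.swap i j with he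
  -- swap is measure preserving
  have hMP : MeasurePreserving (fun ω : Fin p → ℝ => ω ∘ e) μ μ :=
    (measurePreserving_piCongrLeft (fun _ : Fin p => gaussianReal 0 1) e).symm _
  have hcomp : ∀ F : (Fin p → ℝ) → ℝ,
      ∫ ω, F (ω ∘ e) ∂μ = ∫ ω, F ω ∂μ := fun F =>
    hMP.integral_comp
      (MeasurableEquiv.piCongrLeft (fun _ : Fin p => ℝ) e).symm.measurableEmbedding F
  -- S after swap
  have hS' : ∀ ω : Fin p → ℝ, sumS p lam (ω ∘ e)
      = sumS p lam ω + (lam i - lam j) * (ω j ^ 2 - ω i ^ 2) := by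
    intro ω
    have hterm : ∀ k, lam k * ((ω ∘ e) k) ^ 2 = lam k * ω k ^ 2
        + ((if k = i then lam i * (ω j ^ 2 - ω i ^ 2) else 0)
          + (if k = j then lam j * (ω i ^ 2 - ω j ^ 2) else 0)) := by
      intro k
      rcases eq_or_ne k i with rfl | hki
      · simp [he, Equiv.swap_apply_left, (ne_of_lt hij)]
        ring
      rcases eq_or_ne k j with rfl | hkj
      · simp [he, Equiv.swap_apply_right, hki]
        ring
      · simp [he, Equiv.swap_apply_of_ne_of_ne hki hkj, hki, hkj]
    calc sumS p lam (ω ∘ e) = ∑ k, (lam k * ω k ^ 2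
        + ((if k = i then lam i * (ω j ^ 2 - ω i ^ 2) else 0)
          + (if k = j then lam j * (ω i ^ 2 - ω j ^ 2) else 0))) :=
          Finset.sum_congr rfl fun k _ => hterm k
      _ = sumS p lam ω + (lam i - lam j) * (ω j ^ 2 - ω i ^ 2) := by
          rw [Finset.sum_add_distrib, Finset.sum_add_distrib, Finset.sum_ite_eq',
            Finset.sum_ite_eq', sumS]
          simp only [Finset.mem_univ, if_true]
          ring
  -- integrabilities
  have hinti : Integrable (qq p lam i) μ := qq_integrable p lam hnonneg i hi
  have hintj : Integrable (qq p lam j) μ := qq_integrable p lam hnonneg j hj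
  have hinti' : Integrable (fun ω => qq p lam i (ω ∘ e)) μ := hMP.integrable_comp hinti.aestronglyMeasurable |>.mpr hinti
  have hintj' : Integrable (fun ω => qq p lam j (ω ∘ e)) μ := hMP.integrable_comp hintj.aestronglyMeasurable |>.mpr hintj
  set D : (Fin p → ℝ) → ℝ :=
    fun ω => (qq p lam j ω - qq p lam i ω) + (qq p lam j (ω ∘ e) - qq p lam i (ω ∘ e)) with hD
  have hDint : Integrable D μ := (hintj.sub hinti).add (hintj'.sub hinti')
  -- a.e. positivity of D
  have hae := stdGaussianPi_ae p i j hne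
  have hDpos : ∀ᵐ ω ∂μ, 0 < D ω := by
    refine hae.mono fun ω hω => ?_
    obtain ⟨hω0, hωsq⟩ := hω
    have hS1 : 0 < sumS p lam ω :=
      lt_of_lt_of_le (by positivity) (le_sumS p lam hnonneg ω j)
    have hS2 : 0 < sumS p lam (ω ∘ e) := by
      refine lt_of_lt_of_le ?_ (le_sumS p lam hnonneg (ω ∘ e) i)
      have : (ω ∘ e) i = ω j := by simp [he, Equiv.swap_apply_left]
      rw [this]; positivity
    have hei : (ω ∘ e) i = ω j := by simp [he, Equiv.swap_apply_left]
    have hej : (ω ∘ e) j = ω i := by simp [he, Equiv.swap_apply_right]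
    have hkey : D ω = (ω j ^ 2 - ω i ^ 2) * (sumS p lam (ω ∘ e) - sumS p lam ω)
        / (sumS p lam ω * sumS p lam (ω ∘ e)) := by
      rw [hD]
      simp only [qq, hei, hej]
      field_simp
      ring
    rw [hkey, hS' ω]
    have hne2 : ω j ^ 2 - ω i ^ 2 ≠ 0 := sub_ne_zero.mpr (Ne.symm hωsq)
    have h2 : 0 < (ω j ^ 2 - ω i ^ 2) * ((lam i - lam j) * (ω j ^ 2 - ω i ^ 2)) := by
      have := pow_two_pos_of_ne_zero hne2
      nlinarith
    have h3 : sumS p lam ω + (lam i - lam j) * (ω j ^ 2 - ω i ^ 2) - sumS p lam ω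
        = (lam i - lam j) * (ω j ^ 2 - ω i ^ 2) := by ring
    rw [h3]
    exact div_pos h2 (mul_pos hS1 (by rw [← hS' ω]; exact hS2))
  -- positive integral
  have hintDpos : 0 < ∫ ω, D ω ∂μ := by
    rw [integral_pos_iff_support_of_nonneg_ae (hDpos.mono fun ω h => h.le) hDint]
    have hc : μ (Function.support D)ᶜ = 0 := by
      refine measure_mono_null ?_ (ae_iff.mp hDpos)
      intro ω hω
      simp only [Set.mem_compl_iff, Function.mem_support, not_not] at hω
      simp [hω]
    have : μ (Function.support D) = 1 := by
      rw [← measure_univ (μ := μ)]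
      exact measure_congr (MeasureTheory.ae_eq_univ.mpr hc)
    rw [this]; norm_num
  -- integral of D equals 2 * (B - A)
  set A := ∫ ω, qq p lam i ω ∂μ with hA
  set B := ∫ ω, qq p lam j ω ∂μ with hB
  have h1 : Integrable (fun ω => qq p lam j ω - qq p lam i ω) μ := hintj.sub hinti
  have h2 : Integrable (fun ω => qq p lam j (ω ∘ e) - qq p lam i (ω ∘ e)) μ := hintj'.sub hinti'
  have hID : ∫ ω, D ω ∂μ = 2 * (B - A) := by
    have e1 : ∫ ω, D ω ∂μ = (∫ ω, (qq p lam j ω - qq p lam i ω) ∂μ)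
        + ∫ ω, (qq p lam j (ω ∘ e) - qq p lam i (ω ∘ e)) ∂μ := integral_add h1 h2
    have e2 : ∫ ω, (qq p lam j ω - qq p lam i ω) ∂μ = B - A := integral_sub hintj hinti
    have e3 : ∫ ω, (qq p lam j (ω ∘ e) - qq p lam i (ω ∘ e)) ∂μ = B - A := by
      rw [integral_sub hintj' hinti', hcomp (qq p lam j), hcomp (qq p lam i)]
    rw [e1, e2, e3]
    ring
  have hAB : A < B := by
    rw [hID] at hintDpos; linarith
  -- B positive
  have hBpos : 0 < B := by
    have hApos : 0 ≤ A := integral_nonneg fun ω => qq_nonneg p lam hnonneg i ω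
    linarith
  -- final arithmetic
  rw [sscmEigen_eq p lam i, sscmEigen_eq p lam j, ← hμ, ← hA, ← hB]
  calc lam i * A / (lam j * B) = lam i / lam j * (A / B) := by rw [div_mul_div_comm]
    _ < lam i / lam j * 1 :=
        mul_lt_mul_of_pos_left ((div_lt_one hBpos).mpr hAB) (div_pos hi hj)
    _ = lam i / lam j := mul_one _
end

section
/- Let X_1 and X_2 be independent chi-squared random variables with one degree of freedom, let 0 < r < 1 and w > 0. Then E[(X_2 − X_1) / (r X_2 + X_1 + w)] > 0. -/
/-!
Write `f(x, y) = (y² - x²) / (r y² + x² + w)`. Since `X₁` and `X₂` are i.i.d., swapping them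
does not change the expectation, so `2 E[f] = E[f(X₁, X₂) + f(X₂, X₁)]`, and
`f(x, y) + f(y, x) = (1 - r) (y² - x²)² / ((r y² + x² + w) (r x² + y² + w))`,
which is nonnegative and vanishes only where `y² = x²`, a null set for a law without atoms.
Integrability is free: `|f| ≤ 1 / r` because `r ≤ 1`.
-/

open MeasureTheory ProbabilityTheory

section Real

variable {r w u v : ℝ}

lemma abs_sub_div_le_inv (hr0 : 0 < r) (hr1 : r ≤ 1) (hw : 0 < w) (hu : 0 ≤ u) (hv : 0 ≤ v) :
    |(v - u) / (r * v + u + w)| ≤ r⁻¹ := by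
  have hD : 0 < r * v + u + w := by positivity
  rw [abs_div, abs_of_pos hD, div_le_iff₀ hD, abs_le]
  constructor <;> nlinarith [mul_le_mul_of_nonneg_right hr1 hu, inv_mul_cancel₀ hr0.ne',
    inv_pos.2 hr0]

lemma sub_div_add_sub_div_swap (hr0 : 0 ≤ r) (hw : 0 < w) (hu : 0 ≤ u) (hv : 0 ≤ v) :
    (v - u) / (r * v + u + w) + (u - v) / (r * u + v + w)
      = (1 - r) * (v - u) ^ 2 / ((r * v + u + w) * (r * u + v + w)) := by
  have hD₁ : 0 < r * v + u + w := by positivity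
  have hD₂ : 0 < r * u + v + w := by positivity
  field_simp
  ring

end Real

section Symmetrization

variable {α : Type*} [MeasurableSpace α]

lemma integral_pos_of_ae_pos {μ : Measure α} [NeZero μ] {f : α → ℝ} (hfi : Integrable f μ)
    (hf : ∀ᵐ x ∂μ, 0 < f x) : 0 < ∫ x, f x ∂μ := by
  rw [integral_pos_iff_support_of_nonneg_ae (hf.mono fun _ hx => hx.le) hfi]
  exact (Measure.measure_univ_pos.2 (NeZero.ne μ)).trans_le
    (measure_mono_ae (hf.mono fun _ hx _ => hx.ne'))

lemma two_mul_integral_prod_self {μ : Measure α} [SFinite μ] {f : α × α → ℝ}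
    (hf : Integrable f (μ.prod μ)) :
    2 * ∫ z, f z ∂μ.prod μ = ∫ z, (f z + f z.swap) ∂μ.prod μ := by
  have hf_swap : Integrable (fun z => f z.swap) (μ.prod μ) := hf.swap
  rw [integral_add hf hf_swap, integral_prod_swap f, two_mul]

end Symmetrization

lemma ae_sq_ne_sq {μ : Measure ℝ} [NullSingletonClass μ] (a : ℝ) : ∀ᵐ y ∂μ, y ^ 2 ≠ a ^ 2 := by
  refine measure_mono_null (fun y hy => ?_) ((Set.toFinite {a, -a}).measure_zero μ)
  simpa using sq_eq_sq_iff_eq_or_eq_neg.1 (not_not.1 hy)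

theorem integral_sq_sub_sq_div_pos {μ : Measure ℝ} [IsProbabilityMeasure μ]
    [NullSingletonClass μ] {r w : ℝ} (hr0 : 0 < r) (hr1 : r < 1) (hw : 0 < w) :
    0 < ∫ y : ℝ × ℝ, (y.2 ^ 2 - y.1 ^ 2) / (r * y.2 ^ 2 + y.1 ^ 2 + w) ∂μ.prod μ := by
  set f : ℝ × ℝ → ℝ := fun y => (y.2 ^ 2 - y.1 ^ 2) / (r * y.2 ^ 2 + y.1 ^ 2 + w)
  have hf : Integrable f (μ.prod μ) := by
    refine Integrable.of_bound (C := r⁻¹) ?_ (ae_of_all _ fun y => ?_)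
    · exact Measurable.aestronglyMeasurable (by fun_prop)
    · exact abs_sub_div_le_inv hr0 hr1.le hw (sq_nonneg _) (sq_nonneg _)
  have h_off_diag : ∀ᵐ y ∂μ.prod μ, y.2 ^ 2 ≠ y.1 ^ 2 :=
    (Measure.ae_prod_iff_ae_ae (measurableSet_eq_fun (by fun_prop) (by fun_prop)).compl).2
      (ae_of_all _ ae_sq_ne_sq)
  have h_swap_pos : ∀ᵐ y ∂μ.prod μ, 0 < f y + f y.swap := by
    filter_upwards [h_off_diag] with y hy
    simp only [f, Prod.fst_swap, Prod.snd_swap]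
    rw [sub_div_add_sub_div_swap hr0.le hw (sq_nonneg _) (sq_nonneg _)]
    have h_num : 0 < (y.2 ^ 2 - y.1 ^ 2) ^ 2 := sq_pos_of_ne_zero (sub_ne_zero.2 hy)
    have h_one_sub : 0 < 1 - r := sub_pos.2 hr1
    positivity
  have h_two_mul := integral_pos_of_ae_pos (f := fun y => f y + f y.swap) (hf.add hf.swap)
    h_swap_pos
  rw [← two_mul_integral_prod_self hf] at h_two_mul
  linarith

theorem chiSq_ratio_expectation_pos (r w : ℝ) (hr0 : 0 < r) (hr1 : r < 1) (hw : 0 < w) :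
    0 < ∫ y : ℝ × ℝ,
        ((y.2) ^ 2 - (y.1) ^ 2) / (r * (y.2) ^ 2 + (y.1) ^ 2 + w)
        ∂((gaussianReal 0 1).prod (gaussianReal 0 1)) := by
  have := nullSingletonClass_gaussianReal (μ := 0) one_ne_zero
  exact integral_sq_sub_sq_div_pos hr0 hr1 hw
end

section
/- Let 0 < r < 1, c > 0, and z_1 > 0 with (r+1) z_1 + c > 0, and let f : R → [0, ∞) be an integrable function on [−z_1, z_1] with f(z) = f(−z) for all z. Then ∫_{−z_1}^{z_1} z f(z) / ((r+1) z_1 + (r−1) z + c) dz = ∫_0^{z_1} 2 (1−r) z² f(z) / ( ((r+1) z_1 + c)² − (1−r)² z² ) dz, and in particular this integral is nonnegative. -/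
/-!
Substituting `z ↦ -z` folds the integral onto `[0, z1]`. Since `f` is even, the two halves
combine over the common denominator `D(z) D(-z) = ((r+1) z1 + c)² - (1-r)² z²`, where
`D(z) = (r+1) z1 + (r-1) z + c` is positive on `[-z1, z1]`; the folded integrand is then
visibly nonnegative.
-/

open MeasureTheory intervalIntegral

theorem zero_mem_uIcc_neg_self (a : ℝ) : (0 : ℝ) ∈ Set.uIcc (-a) a := by
  rcases le_total 0 a with h | h <;> simp [h]

theorem intervalIntegral.integral_neg_self_eq_integral_add_comp_neg {E : Type*}
    [NormedAddCommGroup E] [NormedSpace ℝ E] {f : ℝ → E} {a : ℝ}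
    (hf : IntervalIntegrable f volume (-a) a) :
    ∫ x in -a..a, f x = ∫ x in 0..a, (f x + f (-x)) := by
  have hleft : IntervalIntegrable f volume (-a) 0 :=
    hf.mono_set (Set.uIcc_subset_uIcc Set.left_mem_uIcc (zero_mem_uIcc_neg_self a))
  have hright : IntervalIntegrable f volume 0 a :=
    hf.mono_set (Set.uIcc_subset_uIcc (zero_mem_uIcc_neg_self a) Set.right_mem_uIcc)
  have hleft_neg : IntervalIntegrable (fun x ↦ f (-x)) volume 0 a := by
    simpa using ((IntervalIntegrable.iff_comp_neg).mp hleft).symm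
  rw [integral_add hright hleft_neg, integral_comp_neg, neg_zero, add_comm,
    integral_add_adjacent_intervals hleft hright]

section Denominator

variable {r c z1 z : ℝ}

theorem denominator_pos_of_le (hr0 : 0 < r) (hr1 : r ≤ 1) (hc : 0 < c) (hz1 : 0 ≤ z1)
    (hz : z ≤ z1) : 0 < (r + 1) * z1 + (r - 1) * z + c := by
  nlinarith

theorem denominator_sq_sub_eq_mul :
    ((r + 1) * z1 + c) ^ 2 - (1 - r) ^ 2 * z ^ 2 =
      ((r + 1) * z1 + (r - 1) * z + c) * ((r + 1) * z1 + (r - 1) * -z + c) := by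
  ring

theorem div_denominator_add_neg_div_denominator (y : ℝ)
    (hpos : (r + 1) * z1 + (r - 1) * z + c ≠ 0) (hneg : (r + 1) * z1 + (r - 1) * -z + c ≠ 0) :
    z * y / ((r + 1) * z1 + (r - 1) * z + c) + -z * y / ((r + 1) * z1 + (r - 1) * -z + c) =
      2 * (1 - r) * z ^ 2 * y / (((r + 1) * z1 + c) ^ 2 - (1 - r) ^ 2 * z ^ 2) := by
  rw [div_add_div _ _ hpos hneg, denominator_sq_sub_eq_mul]
  congr 1
  ring

theorem intervalIntegrable_mul_div_denominator (hr0 : 0 < r) (hr1 : r ≤ 1) (hc : 0 < c)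
    (hz1 : 0 ≤ z1) {f : ℝ → ℝ} (hf : IntegrableOn f (Set.Icc (-z1) z1)) :
    IntervalIntegrable (fun z ↦ z * f z / ((r + 1) * z1 + (r - 1) * z + c)) volume (-z1) z1 := by
  have huIcc : Set.uIcc (-z1) z1 = Set.Icc (-z1) z1 := Set.uIcc_of_le (by linarith)
  have hcont : ContinuousOn (fun z ↦ z / ((r + 1) * z1 + (r - 1) * z + c)) (Set.uIcc (-z1) z1) :=
    continuousOn_id.div (by fun_prop) fun z hz ↦
      (denominator_pos_of_le hr0 hr1 hc hz1 (huIcc ▸ hz).2).ne'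
  convert (huIcc ▸ hf : IntegrableOn f (Set.uIcc (-z1) z1) volume).intervalIntegrable
    |>.mul_continuousOn hcont using 1
  ext z
  ring

end Denominator

theorem symmetrization_identity_general (r c z1 : ℝ) (hr0 : 0 < r) (hr1 : r < 1)
    (hc : 0 < c) (hz1 : 0 < z1)
    (f : ℝ → ℝ) (hf0 : ∀ z, 0 ≤ f z)
    (hfint : IntegrableOn f (Set.Icc (-z1) z1))
    (hsymm : ∀ z, f z = f (-z)) :
    (∫ z in (-z1)..z1, z * f z / ((r + 1) * z1 + (r - 1) * z + c)) =
      (∫ z in (0 : ℝ)..z1,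
        2 * (1 - r) * z ^ 2 * f z / (((r + 1) * z1 + c) ^ 2 - (1 - r) ^ 2 * z ^ 2)) ∧
    0 ≤ ∫ z in (-z1)..z1, z * f z / ((r + 1) * z1 + (r - 1) * z + c) := by
  have hD : ∀ z ≤ z1, 0 < (r + 1) * z1 + (r - 1) * z + c := fun z ↦
    denominator_pos_of_le hr0 hr1.le hc hz1.le
  have hidentity : (∫ z in (-z1)..z1, z * f z / ((r + 1) * z1 + (r - 1) * z + c)) =
      ∫ z in (0 : ℝ)..z1,
        2 * (1 - r) * z ^ 2 * f z / (((r + 1) * z1 + c) ^ 2 - (1 - r) ^ 2 * z ^ 2) := by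
    rw [integral_neg_self_eq_integral_add_comp_neg
      (intervalIntegrable_mul_div_denominator hr0 hr1.le hc hz1.le hfint)]
    refine integral_congr fun z hz ↦ ?_
    rw [Set.uIcc_of_le hz1.le] at hz
    rw [← hsymm z]
    exact div_denominator_add_neg_div_denominator (f z) (hD z hz.2).ne'
      (hD (-z) (by linarith [hz.1])).ne'
  refine ⟨hidentity, hidentity ▸ integral_nonneg hz1.le fun z hz ↦ ?_⟩
  have hnum : 0 ≤ 2 * (1 - r) * z ^ 2 * f z := by
    have := hf0 z
    have : 0 ≤ 1 - r := by linarith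
    positivity
  rw [denominator_sq_sub_eq_mul]
  exact div_nonneg hnum (mul_pos (hD z hz.2) (hD (-z) (by linarith [hz.1]))).le

theorem symmetrization_identity (r c z1 : ℝ) (hr0 : 0 < r) (hr1 : r < 1)
    (hc : 0 < c) (hz1 : 0 < z1) (hden : 0 < (r + 1) * z1 + c)
    (f : ℝ → ℝ) (hf0 : ∀ z, 0 ≤ f z)
    (hfint : IntegrableOn f (Set.Icc (-z1) z1))
    (hsymm : ∀ z, f z = f (-z)) :
    (∫ z in (-z1)..z1, z * f z / ((r + 1) * z1 + (r - 1) * z + c)) =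
      (∫ z in (0 : ℝ)..z1,
        2 * (1 - r) * z ^ 2 * f z / (((r + 1) * z1 + c) ^ 2 - (1 - r) ^ 2 * z ^ 2)) ∧
    0 ≤ ∫ z in (-z1)..z1, z * f z / ((r + 1) * z1 + (r - 1) * z + c) :=
  symmetrization_identity_general r c z1 hr0 hr1 hc hz1 f hf0 hfint hsymm
end

section
/- Let Z_1, ..., Z_p be nonnegative random variables with Σ_j Z_j > 0 almost surely, and let ρ_1, ..., ρ_p ≥ 0 with maximum attained at index k_0 (i.e. ρ_{k_0} = max_j ρ_j > 0). Suppose that P(Σ_j ρ_j Z_j < ρ_{k_0} Σ_j Z_j) = 1 (e.g. some index m with ρ_m < ρ_{k_0} has Z_m > 0 a.s.) and that P(Z_{k_0} > 0) > 0. Then E[ρ_{k_0} Z_{k_0} / Σ_j ρ_j Z_j] > E[Z_{k_0} / Σ_j Z_j]. -/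
/-!
Pointwise, `Z k0 / ∑ Z = ρ k0 Z k0 / (ρ k0 ∑ Z)`, and the denominator `ρ k0 ∑ Z` strictly exceeds
`∑ ρ Z` almost surely, so the weighted ratio dominates the plain one everywhere and strictly wherever
`Z k0 > 0`. Both ratios lie in `[0, 1]`, hence are integrable, and a strict inequality on a set of
positive measure survives integration.
-/

open MeasureTheory

theorem integral_lt_integral_of_ae_le_of_measure_setOf_lt_ne_zero {α : Type*} [MeasurableSpace α]
    {μ : Measure α} {f g : α → ℝ} (hfi : Integrable f μ) (hgi : Integrable g μ)
    (hle : f ≤ᵐ[μ] g) (hlt : μ {x | f x < g x} ≠ 0) :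
    ∫ x, f x ∂μ < ∫ x, g x ∂μ := by
  rw [← sub_pos, ← integral_sub hgi hfi, integral_pos_iff_support_of_nonneg_ae
    (hle.mono fun _ => sub_nonneg.2) (hgi.sub hfi)]
  exact pos_iff_ne_zero.2 (mt (measure_mono_null fun x hx => (sub_pos.2 hx).ne') hlt)

theorem integrable_div_of_ae_nonneg_of_ae_le {α : Type*} [MeasurableSpace α] {μ : Measure α}
    [IsFiniteMeasure μ] {f g : α → ℝ} (hf : AEMeasurable f μ) (hg : AEMeasurable g μ)
    (hf0 : 0 ≤ᵐ[μ] f) (hfg : f ≤ᵐ[μ] g) :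
    Integrable (fun x => f x / g x) μ := by
  refine (integrable_const (1 : ℝ)).mono' (hf.div hg).aestronglyMeasurable ?_
  filter_upwards [hf0, hfg] with x h0 hle
  rw [Real.norm_eq_abs, abs_of_nonneg (div_nonneg h0 (h0.trans hle))]
  exact div_le_one_of_le₀ hle (h0.trans hle)

section WeightedRatio

variable {ι : Type*} [Fintype ι] {z ρ : ι → ℝ} {k : ι}

theorem div_sum_lt_mul_div_sum_mul (hz : ∀ i, 0 ≤ z i) (hρ : ∀ i, 0 ≤ ρ i) (hρk : 0 < ρ k)
    (hzk : 0 < z k) (hlt : ∑ i, ρ i * z i < ρ k * ∑ i, z i) :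
    z k / ∑ i, z i < ρ k * z k / ∑ i, ρ i * z i := by
  have hnum : 0 < ρ k * z k := mul_pos hρk hzk
  have hden : ρ k * z k ≤ ∑ i, ρ i * z i :=
    Finset.single_le_sum (fun i _ => mul_nonneg (hρ i) (hz i)) (Finset.mem_univ k)
  calc z k / ∑ i, z i = ρ k * z k / (ρ k * ∑ i, z i) := (mul_div_mul_left _ _ hρk.ne').symm
    _ < ρ k * z k / ∑ i, ρ i * z i := div_lt_div_of_pos_left hnum (hnum.trans_le hden) hlt

theorem div_sum_le_mul_div_sum_mul (hz : ∀ i, 0 ≤ z i) (hρ : ∀ i, 0 ≤ ρ i) (hρk : 0 < ρ k)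
    (hlt : ∑ i, ρ i * z i < ρ k * ∑ i, z i) :
    z k / ∑ i, z i ≤ ρ k * z k / ∑ i, ρ i * z i := by
  rcases (hz k).eq_or_lt with hzk | hzk
  · simp [← hzk]
  · exact (div_sum_lt_mul_div_sum_mul hz hρ hρk hzk hlt).le

end WeightedRatio

theorem weighted_ratio_expectation_gt_general {Ω : Type*} [MeasurableSpace Ω]
    (P : Measure Ω) [IsProbabilityMeasure P]
    (p : ℕ) (Z : Fin p → Ω → ℝ) (hmeas : ∀ i, Measurable (Z i))
    (hZ0 : ∀ i, ∀ᵐ ω ∂P, 0 ≤ Z i ω)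
    (ρ : Fin p → ℝ) (hρ : ∀ i, 0 ≤ ρ i) (k0 : Fin p)
    (hρpos : 0 < ρ k0)
    (hstrict : ∀ᵐ ω ∂P, ∑ j, ρ j * Z j ω < ρ k0 * ∑ j, Z j ω)
    (hZk0 : 0 < P {ω | 0 < Z k0 ω}) :
    (∫ ω, Z k0 ω / ∑ j, Z j ω ∂P) <
      ∫ ω, ρ k0 * Z k0 ω / ∑ j, ρ j * Z j ω ∂P := by
  have hZ : ∀ᵐ ω ∂P, ∀ i, 0 ≤ Z i ω := ae_all_iff.2 hZ0
  have hf : Integrable (fun ω => Z k0 ω / ∑ j, Z j ω) P := by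
    refine integrable_div_of_ae_nonneg_of_ae_le (hmeas k0).aemeasurable
      (Finset.aemeasurable_fun_sum _ fun i _ => (hmeas i).aemeasurable) (hZ0 k0) ?_
    filter_upwards [hZ] with ω h0 using Finset.single_le_sum (fun i _ => h0 i) (Finset.mem_univ k0)
  have hg : Integrable (fun ω => ρ k0 * Z k0 ω / ∑ j, ρ j * Z j ω) P := by
    refine integrable_div_of_ae_nonneg_of_ae_le ((hmeas k0).const_mul _).aemeasurable
      (Finset.aemeasurable_fun_sum _ fun i _ => ((hmeas i).const_mul _).aemeasurable)
      ((hZ0 k0).mono fun ω h => mul_nonneg hρpos.le h) ?_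
    filter_upwards [hZ] with ω h0 using
      Finset.single_le_sum (fun i _ => mul_nonneg (hρ i) (h0 i)) (Finset.mem_univ k0)
  refine integral_lt_integral_of_ae_le_of_measure_setOf_lt_ne_zero hf hg ?_ ?_
  · filter_upwards [hZ, hstrict] with ω h0 hlt using div_sum_le_mul_div_sum_mul h0 hρ hρpos hlt
  · refine (hZk0.trans_le (measure_mono_ae ?_)).ne'
    filter_upwards [hZ, hstrict] with ω h0 hlt hpos using
      div_sum_lt_mul_div_sum_mul h0 hρ hρpos hpos hlt

theorem weighted_ratio_expectation_gt {Ω : Type*} [MeasurableSpace Ω]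
    (P : Measure Ω) [IsProbabilityMeasure P]
    (p : ℕ) (Z : Fin p → Ω → ℝ) (hmeas : ∀ i, Measurable (Z i))
    (hZ0 : ∀ i, ∀ᵐ ω ∂P, 0 ≤ Z i ω)
    (hZsum : ∀ᵐ ω ∂P, 0 < ∑ j, Z j ω)
    (ρ : Fin p → ℝ) (hρ : ∀ i, 0 ≤ ρ i) (k0 : Fin p)
    (hmax : ∀ j, ρ j ≤ ρ k0) (hρpos : 0 < ρ k0)
    (hstrict : ∀ᵐ ω ∂P, ∑ j, ρ j * Z j ω < ρ k0 * ∑ j, Z j ω)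
    (hZk0 : 0 < P {ω | 0 < Z k0 ω}) :
    (∫ ω, Z k0 ω / ∑ j, Z j ω ∂P) <
      ∫ ω, ρ k0 * Z k0 ω / ∑ j, ρ j * Z j ω ∂P :=
  weighted_ratio_expectation_gt_general P p Z hmeas hZ0 ρ hρ k0 hρpos hstrict hZk0
end

section
/- Let Y be standard Gaussian in R^p and let Φ_p = { λ ∈ [0,1]^p : λ_1 ≥ ... ≥ λ_p ≥ 0, Σ_j λ_j = 1 }. Define φ : Φ_p → Φ_p by φ(λ)_i = E[λ_i Y_i² / Σ_j λ_j Y_j²]. Then φ is injective: φ(λ) = φ(λ') implies λ = λ'. -/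
open MeasureTheory ProbabilityTheory Real

/-!
Let `w_i(λ, ω) = λ_i ω_i² / Σ_j λ_j ω_j²`, so that `φ(λ)_i = E[w_i(λ, Y)]`. If `λ_i > 0` then
`φ(λ)_i > 0`, so `φ(λ) = φ(λ')` forces `supp λ ⊆ supp λ'`. Let `r = max λ_i / λ'_i`, attained at
`i₀`; then `λ ≤ r λ'` with equality at `i₀`. Since `w_{i₀}` is invariant under scaling and strictly
decreasing in the other coordinates at every `ω` without zero coordinates (almost every `ω`),
`λ ≠ r λ'` would give `φ(λ')_{i₀} = E[w_{i₀}(r λ', Y)] < E[w_{i₀}(λ, Y)] = φ(λ)_{i₀}`.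
Hence `λ = r λ'`, and normalisation gives `r = 1`.
-/

open Finset Function

lemma integral_lt_integral_of_ae_lt {α : Type*} [MeasurableSpace α] {μ : Measure α} [NeZero μ]
    {f g : α → ℝ} (hf : Integrable f μ) (hg : Integrable g μ) (hfg : ∀ᵐ a ∂μ, f a < g a) :
    ∫ a, f a ∂μ < ∫ a, g a ∂μ := by
  have hle : f ≤ᵐ[μ] g := hfg.mono fun _ => le_of_lt
  refine (integral_mono_ae hf hg hle).lt_of_ne fun h => ?_
  obtain ⟨a, hlt, heq⟩ := (hfg.and ((integral_eq_iff_of_ae_le hf hg hle).mp h)).exists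
  exact hlt.ne heq

lemma exists_le_smul_of_support_subset {ι : Type*} [Fintype ι] {lam lam' : ι → ℝ}
    (h0' : 0 ≤ lam') (hsupp : support lam ⊆ support lam') (hpos : ∃ k, 0 < lam' k) :
    ∃ i r, 0 < lam' i ∧ lam i = r * lam' i ∧ lam ≤ r • lam' := by
  obtain ⟨k, hk⟩ := hpos
  obtain ⟨i, hi, hmax⟩ := exists_max_image ({j | 0 < lam' j} : Finset ι)
    (fun j => lam j / lam' j) ⟨k, by simpa using hk⟩
  have hi' : 0 < lam' i := (mem_filter.1 hi).2
  refine ⟨i, lam i / lam' i, hi', (div_mul_cancel₀ _ hi'.ne').symm, fun j => ?_⟩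
  rcases (h0' j).lt_or_eq with hj | hj
  · exact (div_le_iff₀ hj).1 (hmax j (by simpa using hj))
  · have : lam j = 0 := not_ne_iff.1 fun h => hsupp h hj.symm
    simp [this, ← hj]

section SscmWeight

variable {ι : Type*} [Fintype ι] {lam mu : ι → ℝ} {i : ι} {ω : ι → ℝ}

noncomputable def sscmWeight (lam : ι → ℝ) (i : ι) (ω : ι → ℝ) : ℝ :=
  lam i * ω i ^ 2 / ∑ j, lam j * ω j ^ 2

lemma mul_sq_le_sum_mul_sq (hlam : 0 ≤ lam) (i : ι) (ω : ι → ℝ) :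
    lam i * ω i ^ 2 ≤ ∑ j, lam j * ω j ^ 2 :=
  single_le_sum (fun j _ => mul_nonneg (hlam j) (sq_nonneg _)) (mem_univ i)

lemma sscmWeight_nonneg (hlam : 0 ≤ lam) : 0 ≤ sscmWeight lam i ω :=
  div_nonneg (mul_nonneg (hlam i) (sq_nonneg _))
    (sum_nonneg fun j _ => mul_nonneg (hlam j) (sq_nonneg _))

lemma sscmWeight_le_one (hlam : 0 ≤ lam) : sscmWeight lam i ω ≤ 1 :=
  div_le_one_of_le₀ (mul_sq_le_sum_mul_sq hlam i ω)
    (sum_nonneg fun j _ => mul_nonneg (hlam j) (sq_nonneg _))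

lemma sscmWeight_of_eq_zero (h : lam i = 0) : sscmWeight lam i ω = 0 := by
  simp [sscmWeight, h]

lemma sscmWeight_pos (hlam : 0 ≤ lam) (hi : 0 < lam i) (hω : ω i ≠ 0) :
    0 < sscmWeight lam i ω := by
  have hnum : 0 < lam i * ω i ^ 2 := by positivity
  exact div_pos hnum (hnum.trans_le (mul_sq_le_sum_mul_sq hlam i ω))

lemma sscmWeight_smul {r : ℝ} (hr : r ≠ 0) (lam : ι → ℝ) (i : ι) :
    sscmWeight (r • lam) i = sscmWeight lam i := by
  funext ω
  simp only [sscmWeight, Pi.smul_apply, smul_eq_mul, mul_assoc, ← mul_sum]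
  exact mul_div_mul_left _ _ hr

lemma sscmWeight_lt_of_le_of_ne (hlam : 0 ≤ lam) (hle : lam ≤ mu) (hne : lam ≠ mu)
    (hi : lam i = mu i) (hpos : 0 < lam i) (hω : ∀ j, ω j ≠ 0) :
    sscmWeight mu i ω < sscmWeight lam i ω := by
  obtain ⟨k, hk⟩ := ne_iff.1 hne
  have hnum : 0 < lam i * ω i ^ 2 := by have := hω i; positivity
  have hsum_lt : ∑ j, lam j * ω j ^ 2 < ∑ j, mu j * ω j ^ 2 := by
    have := hω k
    refine sum_lt_sum (fun j _ => mul_le_mul_of_nonneg_right (hle j) (sq_nonneg _))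
      ⟨k, mem_univ k, mul_lt_mul_of_pos_right ((hle k).lt_of_ne hk) (by positivity)⟩
  rw [sscmWeight, sscmWeight, ← hi]
  exact div_lt_div_of_pos_left hnum (hnum.trans_le (mul_sq_le_sum_mul_sq hlam i ω)) hsum_lt

lemma measurable_sscmWeight (lam : ι → ℝ) (i : ι) : Measurable (sscmWeight lam i) := by
  unfold sscmWeight
  fun_prop

variable {μ : Measure (ι → ℝ)} [IsFiniteMeasure μ]

lemma integrable_sscmWeight (hlam : 0 ≤ lam) (i : ι) : Integrable (sscmWeight lam i) μ :=
  (integrable_const 1).mono' (measurable_sscmWeight lam i).aestronglyMeasurable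
    (ae_of_all _ fun _ => by
      rw [Real.norm_of_nonneg (sscmWeight_nonneg hlam)]; exact sscmWeight_le_one hlam)

lemma integral_sscmWeight_pos [NeZero μ] (hμ : ∀ᵐ ω ∂μ, ω i ≠ 0) (hlam : 0 ≤ lam)
    (hi : 0 < lam i) : 0 < ∫ ω, sscmWeight lam i ω ∂μ := by
  simpa using integral_lt_integral_of_ae_lt (integrable_const 0) (integrable_sscmWeight hlam i)
    (hμ.mono fun _ hω => sscmWeight_pos hlam hi hω)

lemma integral_sscmWeight_lt [NeZero μ] (hμ : ∀ᵐ ω ∂μ, ∀ j, ω j ≠ 0) (hlam : 0 ≤ lam)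
    (hle : lam ≤ mu) (hne : lam ≠ mu) (hi : lam i = mu i) (hpos : 0 < lam i) :
    ∫ ω, sscmWeight mu i ω ∂μ < ∫ ω, sscmWeight lam i ω ∂μ :=
  integral_lt_integral_of_ae_lt (integrable_sscmWeight (hlam.trans hle) i)
    (integrable_sscmWeight hlam i)
    (hμ.mono fun _ => sscmWeight_lt_of_le_of_ne hlam hle hne hi hpos)

theorem eq_of_integral_sscmWeight_eq [NeZero μ] (hμ : ∀ᵐ ω ∂μ, ∀ j, ω j ≠ 0)
    {lam' : ι → ℝ} (h0 : 0 ≤ lam) (h0' : 0 ≤ lam')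
    (hsum : ∑ i, lam i = 1) (hsum' : ∑ i, lam' i = 1)
    (heq : ∀ i, ∫ ω, sscmWeight lam i ω ∂μ = ∫ ω, sscmWeight lam' i ω ∂μ) : lam = lam' := by
  have hsupp : support lam ⊆ support lam' := fun j hj hj' => by
    have := integral_sscmWeight_pos (hμ.mono fun _ hω => hω j) h0 ((h0 j).lt_of_ne' hj)
    simp [heq j, sscmWeight_of_eq_zero hj'] at this
  obtain ⟨k, -, hk⟩ := exists_lt_of_sum_lt (by simp [hsum'] : ∑ _k : ι, (0 : ℝ) < ∑ k, lam' k)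
  obtain ⟨i, r, hi, hlam_i, hle⟩ := exists_le_smul_of_support_subset h0' hsupp ⟨k, hk⟩
  have hr : 1 ≤ r := calc
    1 = ∑ j, lam j := hsum.symm
    _ ≤ ∑ j, r * lam' j := sum_le_sum fun j _ => hle j
    _ = r := by rw [← mul_sum, hsum', mul_one]
  have hscale : lam = r • lam' := by
    by_contra hne
    have := integral_sscmWeight_lt hμ h0 hle hne hlam_i (by rw [hlam_i]; positivity)
    rw [sscmWeight_smul (by positivity), ← heq i] at this
    exact this.false
  have hr1 : r = 1 := by simpa [hscale, ← mul_sum, hsum'] using hsum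
  rw [hscale, hr1, one_smul]

end SscmWeight

instance isProbabilityMeasure_stdGaussianPi (p : ℕ) : IsProbabilityMeasure (stdGaussianPi p) := by
  unfold stdGaussianPi; infer_instance

lemma stdGaussianPi_ae_ne_zero (p : ℕ) : ∀ᵐ ω ∂stdGaussianPi p, ∀ j, ω j ≠ 0 := by
  refine ae_all_iff.2 fun j => ?_
  have hnull : gaussianReal 0 1 {0} = 0 :=
    gaussianReal_absolutelyContinuous 0 one_ne_zero Real.volume_singleton
  exact measure_mono_null (fun ω hω => by simpa using hω) (Measure.pi_eval_preimage_null _ hnull)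

theorem sscmEigen_injective_general (p : ℕ) (lam lam' : Fin p → ℝ)
    (hmem : ∀ i, lam i ∈ Set.Icc (0 : ℝ) 1) (hmem' : ∀ i, lam' i ∈ Set.Icc (0 : ℝ) 1)
    (hsum : ∑ i, lam i = 1) (hsum' : ∑ i, lam' i = 1)
    (heq : ∀ i, sscmEigen p lam i = sscmEigen p lam' i) :
    lam = lam' :=
  eq_of_integral_sscmWeight_eq (stdGaussianPi_ae_ne_zero p) (fun i => (hmem i).1)
    (fun i => (hmem' i).1) hsum hsum' heq

theorem sscmEigen_injective (p : ℕ) (lam lam' : Fin p → ℝ)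
    (hmono : Antitone lam) (hmono' : Antitone lam')
    (hmem : ∀ i, lam i ∈ Set.Icc (0 : ℝ) 1) (hmem' : ∀ i, lam' i ∈ Set.Icc (0 : ℝ) 1)
    (hsum : ∑ i, lam i = 1) (hsum' : ∑ i, lam' i = 1)
    (heq : ∀ i, sscmEigen p lam i = sscmEigen p lam' i) :
    lam = lam' :=
  sscmEigen_injective_general p lam lam' hmem hmem' hsum hsum' heq
end

section
/- Let Y be standard Gaussian in R^p, p ≥ 2, and λ_1, ..., λ_p > 0. Then for i ≠ j, E[λ_i Y_i² λ_j Y_j² / (Σ_k λ_k Y_k²)²] = (λ_i λ_j / 4) ∫_0^∞ x dx / ( (1 + λ_i x)(1 + λ_j x) ∏_{k=1}^p (1 + λ_k x)^{1/2} ). -/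
open MeasureTheory ProbabilityTheory Real

/-!
Write `s⁻² = ∫₀^∞ t e^{-st} dt` with `s = ∑ₖ λₖ Yₖ²` and exchange the two integrals; this is
legitimate because the integrand is nonnegative and `λᵢYᵢ² λⱼYⱼ² / s² ≤ 1`. For fixed `t` the
expectation of `λᵢYᵢ² λⱼYⱼ² e^{-ts}` factorizes over the independent coordinates, and the
one-dimensional Gaussian integrals `E[e^{-aY²}] = (1 + 2a)^{-1/2}` and
`E[Y² e^{-aY²}] = (1 + 2a)^{-3/2}` give `λᵢλⱼ (1 + 2tλᵢ)⁻¹ (1 + 2tλⱼ)⁻¹ ∏ₖ (1 + 2tλₖ)^{-1/2}`.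
The substitution `x = 2t` concludes.
-/

open Set

lemma integral_mul_exp_neg_mul_Ioi {s : ℝ} (hs : 0 < s) :
    ∫ t in Ioi (0 : ℝ), t * exp (-(s * t)) = (s ^ 2)⁻¹ := by
  have h := integral_rpow_mul_exp_neg_mul_Ioi two_pos hs
  norm_num at h
  exact h

lemma integrableOn_mul_exp_neg_mul_Ioi {s : ℝ} (hs : 0 < s) :
    IntegrableOn (fun t : ℝ => t * exp (-(s * t))) (Ioi 0) :=
  Integrable.of_integral_ne_zero (by rw [integral_mul_exp_neg_mul_Ioi hs]; positivity)

lemma integral_div_sq_eq_integral_Ioi {Ω : Type*} [MeasurableSpace Ω] {μ : Measure Ω}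
    [SFinite μ] {f S : Ω → ℝ} (hf : Measurable f) (hS : Measurable S) (hf0 : ∀ ω, 0 ≤ f ω)
    (hS0 : ∀ᵐ ω ∂μ, 0 < S ω) (hint : Integrable (fun ω => f ω / S ω ^ 2) μ) :
    ∫ ω, f ω / S ω ^ 2 ∂μ = ∫ t in Ioi (0 : ℝ), t * ∫ ω, f ω * exp (-(S ω * t)) ∂μ := by
  have h_repr : ∀ ω, 0 < S ω →
      f ω / S ω ^ 2 = ∫ t in Ioi (0 : ℝ), f ω * (t * exp (-(S ω * t))) := by
    intro ω hω
    rw [integral_const_mul, integral_mul_exp_neg_mul_Ioi hω, div_eq_mul_inv]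
  have h_int : Integrable (Function.uncurry fun ω t => f ω * (t * exp (-(S ω * t))))
      (μ.prod (volume.restrict (Ioi 0))) := by
    refine (integrable_prod_iff (Measurable.aestronglyMeasurable (by fun_prop))).2 ⟨?_, ?_⟩
    · filter_upwards [hS0] with ω hω using (integrableOn_mul_exp_neg_mul_Ioi hω).const_mul (f ω)
    · refine hint.congr ?_
      filter_upwards [hS0] with ω hω
      rw [h_repr ω hω]
      refine setIntegral_congr_fun measurableSet_Ioi fun t (ht : 0 < t) => ?_
      have := hf0 ω
      exact (Real.norm_of_nonneg (by positivity)).symm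
  calc ∫ ω, f ω / S ω ^ 2 ∂μ
      = ∫ ω, (∫ t in Ioi (0 : ℝ), f ω * (t * exp (-(S ω * t)))) ∂μ :=
        integral_congr_ae (by filter_upwards [hS0] with ω hω using h_repr ω hω)
    _ = ∫ t in Ioi (0 : ℝ), ∫ ω, f ω * (t * exp (-(S ω * t))) ∂μ := integral_integral_swap h_int
    _ = ∫ t in Ioi (0 : ℝ), t * ∫ ω, f ω * exp (-(S ω * t)) ∂μ := by
        simp_rw [mul_left_comm (f _), integral_const_mul]

lemma integrable_mul_mul_div_sq_sum {ι : Type*} [Fintype ι] {μ : Measure (ι → ℝ)}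
    [IsFiniteMeasure μ] {lam : ι → ℝ} (hlam : ∀ k, 0 ≤ lam k) (i j : ι) :
    Integrable (fun ω => lam i * ω i ^ 2 * (lam j * ω j ^ 2) / (∑ k, lam k * ω k ^ 2) ^ 2) μ := by
  refine Integrable.of_bound (Measurable.aestronglyMeasurable (by fun_prop)) 1
    (ae_of_all _ fun ω => ?_)
  have h_term : ∀ k, 0 ≤ lam k * ω k ^ 2 := fun k => mul_nonneg (hlam k) (sq_nonneg _)
  have h_le : ∀ k, lam k * ω k ^ 2 ≤ ∑ k, lam k * ω k ^ 2 := fun k =>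
    Finset.single_le_sum (fun k _ => h_term k) (Finset.mem_univ k)
  rw [Real.norm_of_nonneg (div_nonneg (mul_nonneg (h_term i) (h_term j)) (sq_nonneg _))]
  refine div_le_one_of_le₀ ?_ (sq_nonneg _)
  rw [sq (∑ k, lam k * ω k ^ 2)]
  exact mul_le_mul (h_le i) (h_le j) (h_term j) ((h_term i).trans (h_le i))

lemma integral_sq_mul_exp_neg_mul_sq {b : ℝ} (hb : 0 < b) :
    ∫ y : ℝ, y ^ 2 * exp (-b * y ^ 2) = √π / (2 * b * √b) := by
  have h_even : ∫ y : ℝ, y ^ 2 * exp (-b * y ^ 2)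
      = 2 * ∫ y in Ioi (0 : ℝ), y ^ (2 : ℝ) * exp (-b * y ^ (2 : ℝ)) := by
    have h := integral_comp_abs (f := fun y => y ^ 2 * exp (-b * y ^ 2))
    simp only [sq_abs] at h
    rw [h]
    congr 1
    refine setIntegral_congr_fun measurableSet_Ioi fun y _ => ?_
    norm_cast
  have h_gamma : Gamma ((2 + 1) / 2) = √π / 2 := by
    rw [show ((2 : ℝ) + 1) / 2 = 1 / 2 + 1 by norm_num, Gamma_add_one (by norm_num),
      Gamma_one_half_eq]
    ring
  have h_pow : b ^ (-(2 + 1) / 2 : ℝ) = (b * √b)⁻¹ := by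
    rw [show (-(2 + 1) / 2 : ℝ) = -(1 + 1 / 2) by norm_num, rpow_neg hb.le, rpow_add hb,
      rpow_one, ← sqrt_eq_rpow]
  rw [h_even, integral_rpow_mul_exp_neg_mul_rpow (by norm_num) (by norm_num) hb, h_gamma, h_pow]
  field_simp

lemma integral_mul_exp_neg_mul_sq_gaussianReal (g : ℝ → ℝ) (a : ℝ) :
    ∫ y, g y * exp (-(a * y ^ 2)) ∂gaussianReal 0 1
      = (√(2 * π))⁻¹ * ∫ y, g y * exp (-(a + 1 / 2) * y ^ 2) := by
  rw [integral_gaussianReal_eq_integral_smul one_ne_zero, ← integral_const_mul]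
  congr 1 with y
  rw [gaussianPDFReal, smul_eq_mul,
    show -(a + 1 / 2) * y ^ 2 = -(y - 0) ^ 2 / (2 * 1) + -(a * y ^ 2) by ring, exp_add]
  simp only [NNReal.coe_one, mul_one]
  ring

lemma integral_exp_neg_mul_sq_gaussianReal {a : ℝ} (ha : 0 < 1 + 2 * a) :
    ∫ y, exp (-(a * y ^ 2)) ∂gaussianReal 0 1 = (√(1 + 2 * a))⁻¹ := by
  have h := integral_mul_exp_neg_mul_sq_gaussianReal (fun _ => 1) a
  simp only [one_mul] at h
  rw [h, integral_gaussian, show 1 + 2 * a = 2 * (a + 1 / 2) by ring, sqrt_mul zero_le_two,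
    sqrt_mul zero_le_two, sqrt_div pi_pos.le]
  have : 0 < a + 1 / 2 := by linarith
  field_simp

lemma integral_sq_mul_exp_neg_mul_sq_gaussianReal {a : ℝ} (ha : 0 < 1 + 2 * a) :
    ∫ y, y ^ 2 * exp (-(a * y ^ 2)) ∂gaussianReal 0 1 = ((1 + 2 * a) * √(1 + 2 * a))⁻¹ := by
  have : 0 < a + 1 / 2 := by linarith
  rw [integral_mul_exp_neg_mul_sq_gaussianReal, integral_sq_mul_exp_neg_mul_sq this,
    show 1 + 2 * a = 2 * (a + 1 / 2) by ring, sqrt_mul zero_le_two, sqrt_mul zero_le_two]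
  have : √π ≠ 0 := by positivity
  field_simp

instance inst_s10 (p : ℕ) : IsProbabilityMeasure (stdGaussianPi p) := by
  unfold stdGaussianPi
  infer_instance

lemma ae_pos_sum_mul_sq_stdGaussianPi {p : ℕ} {lam : Fin p → ℝ} (hpos : ∀ k, 0 < lam k)
    (i : Fin p) : ∀ᵐ ω ∂stdGaussianPi p, 0 < ∑ k, lam k * ω k ^ 2 := by
  have := nullSingletonClass_gaussianReal (μ := 0) one_ne_zero
  filter_upwards [Measure.ae_eval_ne (μ := fun _ => gaussianReal 0 1) i 0] with ω hω
  exact (mul_pos (hpos i) (by positivity)).trans_le <|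
    Finset.single_le_sum (fun k _ => mul_nonneg (hpos k).le (sq_nonneg (ω k))) (Finset.mem_univ i)

open Finset in
lemma integral_sq_mul_sq_mul_exp_neg_sum_stdGaussianPi {p : ℕ} {a : Fin p → ℝ}
    (ha : ∀ k, 0 < 1 + 2 * a k) {i j : Fin p} (hij : i ≠ j) :
    ∫ ω, ω i ^ 2 * ω j ^ 2 * exp (-∑ k, a k * ω k ^ 2) ∂stdGaussianPi p
      = ((1 + 2 * a i) * (1 + 2 * a j) * ∏ k, √(1 + 2 * a k))⁻¹ := by
  set g : Fin p → ℝ → ℝ := fun k y =>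
    (if k = i then y ^ 2 else 1) * (if k = j then y ^ 2 else 1) * exp (-(a k * y ^ 2)) with hg
  have h_factor : ∀ ω : Fin p → ℝ,
      ω i ^ 2 * ω j ^ 2 * exp (-∑ k, a k * ω k ^ 2) = ∏ k, g k (ω k) := by
    intro ω
    rw [hg, prod_mul_distrib, prod_mul_distrib, Fintype.prod_ite_eq', Fintype.prod_ite_eq',
      ← exp_sum, sum_neg_distrib]
  have h_coord : ∀ k, ∫ y, g k y ∂gaussianReal 0 1
      = (if k = i then (1 + 2 * a k)⁻¹ else 1) * (if k = j then (1 + 2 * a k)⁻¹ else 1)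
          * (√(1 + 2 * a k))⁻¹ := by
    intro k
    rcases eq_or_ne k i with rfl | hki
    · simp [hg, hij, integral_sq_mul_exp_neg_mul_sq_gaussianReal (ha k), mul_comm]
    rcases eq_or_ne k j with rfl | hkj
    · simp [hg, hki, integral_sq_mul_exp_neg_mul_sq_gaussianReal (ha k), mul_comm]
    · simp [hg, hki, hkj, integral_exp_neg_mul_sq_gaussianReal (ha k)]
  simp_rw [h_factor]
  rw [stdGaussianPi, integral_fintype_prod_eq_prod]
  simp_rw [h_coord]
  rw [prod_mul_distrib, prod_mul_distrib, Fintype.prod_ite_eq', Fintype.prod_ite_eq',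
    prod_inv_distrib, mul_inv, mul_inv]

lemma integral_mul_mul_exp_neg_mul_sum_stdGaussianPi {p : ℕ} {lam : Fin p → ℝ}
    (hlam : ∀ k, 0 ≤ lam k) {i j : Fin p} (hij : i ≠ j) {t : ℝ} (ht : 0 ≤ t) :
    ∫ ω, lam i * ω i ^ 2 * (lam j * ω j ^ 2) * exp (-((∑ k, lam k * ω k ^ 2) * t))
        ∂stdGaussianPi p
      = lam i * lam j
          * ((1 + lam i * (2 * t)) * (1 + lam j * (2 * t)) * ∏ k, √(1 + lam k * (2 * t)))⁻¹ := by
  have h_exponent : ∀ ω : Fin p → ℝ, (∑ k, lam k * ω k ^ 2) * t = ∑ k, lam k * t * ω k ^ 2 :=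
    fun ω => by rw [Finset.sum_mul]; exact Finset.sum_congr rfl fun k _ => by ring
  have h_integrand : ∀ ω : Fin p → ℝ,
      lam i * ω i ^ 2 * (lam j * ω j ^ 2) * exp (-((∑ k, lam k * ω k ^ 2) * t))
        = lam i * lam j * (ω i ^ 2 * ω j ^ 2 * exp (-∑ k, lam k * t * ω k ^ 2)) :=
    fun ω => by rw [h_exponent]; ring
  have h_arg : ∀ k, 1 + lam k * (2 * t) = 1 + 2 * (lam k * t) := fun k => by ring
  simp_rw [h_integrand, integral_const_mul, h_arg]
  rw [integral_sq_mul_sq_mul_exp_neg_sum_stdGaussianPi (fun k => by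
    have := hlam k; positivity) hij]

theorem eta_offdiag_integral_repr_general (p : ℕ) (lam : Fin p → ℝ)
    (hpos : ∀ i, 0 < lam i) (i j : Fin p) (hij : i ≠ j) :
    (∫ ω, lam i * (ω i) ^ 2 * (lam j * (ω j) ^ 2) / (∑ k, lam k * (ω k) ^ 2) ^ 2
        ∂(stdGaussianPi p)) =
      lam i * lam j / 4 *
        ∫ x in Set.Ioi (0 : ℝ),
          x / ((1 + lam i * x) * (1 + lam j * x) * ∏ k, Real.sqrt (1 + lam k * x)) := by
  have hlam : ∀ k, 0 ≤ lam k := fun k => (hpos k).le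
  set r : ℝ → ℝ := fun x => x / ((1 + lam i * x) * (1 + lam j * x) * ∏ k, √(1 + lam k * x))
  have h_laplace : ∀ t ∈ Ioi (0 : ℝ),
      t * ∫ ω, lam i * ω i ^ 2 * (lam j * ω j ^ 2) * exp (-((∑ k, lam k * ω k ^ 2) * t))
          ∂stdGaussianPi p
        = lam i * lam j / 2 * r (2 * t) := fun t (ht : 0 < t) => by
    rw [integral_mul_mul_exp_neg_mul_sum_stdGaussianPi hlam hij ht.le]
    ring
  calc _ = ∫ t in Ioi (0 : ℝ), t * ∫ ω, lam i * ω i ^ 2 * (lam j * ω j ^ 2)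
          * exp (-((∑ k, lam k * ω k ^ 2) * t)) ∂stdGaussianPi p :=
        integral_div_sq_eq_integral_Ioi (by fun_prop) (by fun_prop)
          (fun ω => by have := hlam i; have := hlam j; positivity)
          (ae_pos_sum_mul_sq_stdGaussianPi hpos i) (integrable_mul_mul_div_sq_sum hlam i j)
    _ = ∫ t in Ioi (0 : ℝ), lam i * lam j / 2 * r (2 * t) :=
        setIntegral_congr_fun measurableSet_Ioi h_laplace
    _ = lam i * lam j / 4 * ∫ x in Ioi (0 : ℝ), r x := by
        rw [integral_const_mul, integral_comp_mul_left_Ioi r 0 two_pos, mul_zero, smul_eq_mul]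
        ring

theorem eta_offdiag_integral_repr (p : ℕ) (hp : 2 ≤ p) (lam : Fin p → ℝ)
    (hpos : ∀ i, 0 < lam i) (i j : Fin p) (hij : i ≠ j) :
    (∫ ω, lam i * (ω i) ^ 2 * (lam j * (ω j) ^ 2) / (∑ k, lam k * (ω k) ^ 2) ^ 2
        ∂(stdGaussianPi p)) =
      lam i * lam j / 4 *
        ∫ x in Set.Ioi (0 : ℝ),
          x / ((1 + lam i * x) * (1 + lam j * x) * ∏ k, Real.sqrt (1 + lam k * x)) :=
  eta_offdiag_integral_repr_general p lam hpos i j hij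
end
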